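/- arXiv:2603.26231 — 8 statements merged into one kernel-verified Lean document; each statement's English description precedes it below -/
import Mathlib

section
/- For every x ∈ X(m−1): (i) Σ_{j=1}^n μ^u_j · (x^u_j + 1) · π_m(x + e^u_j) = (Z(m−1)/Z(m)) · π_{m−1}(x), where x + e^u_j ∈ X(m) is obtained from x by adding one task to the j-th uplink coordinate; and (ii) Σ_{y ∈ X(m)} Σ_{j=1}^n μ^u_j · y^u_j · π_m(y) = Z(m−1)/Z(m). Consequently the ratio of (i) to (ii), which is the stationary distribution of the embedded chain observed at uplink service completions, equals π_{m−1}(x). -/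
open scoped BigOperators

/-- A state of the closed queueing network: numbers of tasks at each client's
downlink (`d`), computation (`c`), and uplink (`u`) servers. -/
structure St (n : ℕ) where
  d : Fin n → ℕ
  c : Fin n → ℕ
  u : Fin n → ℕ

namespace St

variable {n : ℕ}

/-- Total number of tasks in a state. -/
def total (x : St n) : ℕ := ∑ i, (x.d i + x.c i + x.u i)

/-- Product-form weight of a state. -/
noncomputable def w (p μc μd μu : Fin n → ℝ) (x : St n) : ℝ :=
  ∏ i,
    (p i / μc i) ^ x.c i *
      ((p i / μd i) ^ x.d i / (Nat.factorial (x.d i) : ℝ)) *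
      ((p i / μu i) ^ x.u i / (Nat.factorial (x.u i) : ℝ))

/-- Normalizing constant `Z(k)` (it vanishes for `k < 0`). -/
noncomputable def Z (p μc μd μu : Fin n → ℝ) (k : ℤ) : ℝ :=
  ∑' x : St n, if (total x : ℤ) = k then w p μc μd μu x else 0

/-- Product-form distribution `π_k`. -/
noncomputable def pd (p μc μd μu : Fin n → ℝ) (k : ℤ) (x : St n) : ℝ :=
  w p μc μd μu x / Z p μc μd μu k

/-- Expectation of `f` under the product-form distribution `π_k`. -/
noncomputable def Epi (p μc μd μu : Fin n → ℝ) (k : ℤ) (f : St n → ℝ) : ℝ :=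
  ∑' x : St n, if (total x : ℤ) = k then f x * pd p μc μd μu k x else 0

end St

open St

/-- Adding one task to the `j`-th uplink coordinate. -/
def addU {n : ℕ} (x : St n) (j : Fin n) : St n :=
  ⟨x.d, x.c, Function.update x.u j (x.u j + 1)⟩

/- ### Auxiliary material -/

namespace StAux

variable {n : ℕ}

lemma st_ext {x y : St n} (hd : x.d = y.d) (hc : x.c = y.c) (hu : x.u = y.u) : x = y := by
  cases x; cases y; simp_all

lemma finite_total (n k : ℕ) : {x : St n | x.total = k}.Finite := by
  classical
  have hsub : {x : St n | x.total = k} ⊆ Set.range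
      (fun f : (Fin n → Fin (k+1)) × (Fin n → Fin (k+1)) × (Fin n → Fin (k+1)) =>
        (⟨fun i => (f.1 i : ℕ), fun i => (f.2.1 i : ℕ), fun i => (f.2.2 i : ℕ)⟩ : St n)) := by
    intro x hx
    have hb : ∀ i : Fin n, x.d i ≤ k ∧ x.c i ≤ k ∧ x.u i ≤ k := by
      intro i
      have h1 : x.d i + x.c i + x.u i ≤ x.total :=
        Finset.single_le_sum (f := fun i => x.d i + x.c i + x.u i)
          (fun _ _ => Nat.zero_le _) (Finset.mem_univ i)
      have h2 : x.total = k := hx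
      omega
    refine ⟨⟨fun i => ⟨x.d i, by have := (hb i).1; omega⟩,
            fun i => ⟨x.c i, by have := (hb i).2.1; omega⟩,
            fun i => ⟨x.u i, by have := (hb i).2.2; omega⟩⟩, ?_⟩
    apply st_ext <;> rfl
  exact (Set.finite_range _).subset hsub

/-- The finite set of states with total `k`. -/
noncomputable def S (n k : ℕ) : Finset (St n) := (finite_total n k).toFinset

lemma mem_S {k : ℕ} {x : St n} : x ∈ S n k ↔ x.total = k := by
  simp [S, Set.Finite.mem_toFinset]

lemma tsum_cond (k : ℕ) (f : St n → ℝ) :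
    (∑' y : St n, if y.total = k then f y else 0) = ∑ y ∈ S n k, f y := by
  rw [tsum_eq_sum (s := S n k)]
  · exact Finset.sum_congr rfl fun y hy => if_pos (mem_S.mp hy)
  · intro b hb
    exact if_neg fun h => hb (mem_S.mpr h)

lemma Z_eq (p μc μd μu : Fin n → ℝ) (k : ℕ) :
    Z p μc μd μu (k : ℤ) = ∑ y ∈ S n k, w p μc μd μu y := by
  unfold St.Z
  rw [tsum_eq_sum (s := S n k)]
  · exact Finset.sum_congr rfl fun y hy => if_pos (by exact_mod_cast mem_S.mp hy)
  · intro b hb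
    exact if_neg fun h => hb (mem_S.mpr (by exact_mod_cast h))

variable {p μc μd μu : Fin n → ℝ}

lemma w_pos (hp : ∀ i, 0 < p i) (hμc : ∀ i, 0 < μc i) (hμd : ∀ i, 0 < μd i)
    (hμu : ∀ i, 0 < μu i) (x : St n) : 0 < w p μc μd μu x := by
  unfold St.w
  apply Finset.prod_pos
  intro i _
  have h1 := hp i; have h2 := hμc i; have h3 := hμd i; have h4 := hμu i
  have f1 : (0:ℝ) < (Nat.factorial (x.d i) : ℝ) := by positivity
  have f2 : (0:ℝ) < (Nat.factorial (x.u i) : ℝ) := by positivity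
  positivity

lemma Z_pos (hn : 1 ≤ n) (hp : ∀ i, 0 < p i) (hμc : ∀ i, 0 < μc i) (hμd : ∀ i, 0 < μd i)
    (hμu : ∀ i, 0 < μu i) (k : ℕ) : 0 < Z p μc μd μu (k : ℤ) := by
  rw [Z_eq]
  apply Finset.sum_pos
  · intro y _; exact w_pos hp hμc hμd hμu y
  · refine ⟨⟨fun _ => 0, fun _ => 0, fun i => if i = ⟨0, hn⟩ then k else 0⟩, ?_⟩
    rw [mem_S]
    simp [St.total]

lemma sum_update (u : Fin n → ℕ) (j : Fin n) (b : ℕ) :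
    ∑ i, Function.update u j b i = b + ∑ i ∈ Finset.univ.erase j, u i := by
  rw [Finset.sum_update_of_mem (Finset.mem_univ j)]
  congr 1
  apply Finset.sum_congr
  · ext i; simp [Finset.mem_erase, eq_comm]
  · intros; rfl

lemma total_addU (x : St n) (j : Fin n) : (addU x j).total = x.total + 1 := by
  unfold St.total addU
  simp only [Finset.sum_add_distrib]
  have h1 := sum_update x.u j (x.u j + 1)
  have h2 : ∑ i, x.u i = x.u j + ∑ i ∈ Finset.univ.erase j, x.u i :=
    (Finset.add_sum_erase Finset.univ x.u (Finset.mem_univ j)).symm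
  omega

/-- Removing one task from the `j`-th uplink coordinate. -/
def subU (y : St n) (j : Fin n) : St n := ⟨y.d, y.c, Function.update y.u j (y.u j - 1)⟩

lemma total_subU' (y : St n) (j : Fin n) (hy : 1 ≤ y.u j) :
    (subU y j).total + 1 = y.total := by
  unfold St.total subU
  simp only [Finset.sum_add_distrib]
  have h1 := sum_update y.u j (y.u j - 1)
  have h2 : ∑ i, y.u i = y.u j + ∑ i ∈ Finset.univ.erase j, y.u i :=
    (Finset.add_sum_erase Finset.univ y.u (Finset.mem_univ j)).symm
  omega

lemma subU_addU (x : St n) (j : Fin n) : subU (addU x j) j = x := by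
  apply st_ext
  · rfl
  · rfl
  · funext i
    by_cases h : i = j
    · subst h; simp [subU, addU]
    · simp [subU, addU, Function.update_of_ne h]

lemma addU_subU (y : St n) (j : Fin n) (hy : 1 ≤ y.u j) : addU (subU y j) j = y := by
  apply st_ext
  · rfl
  · rfl
  · funext i
    by_cases h : i = j
    · subst h; simp [subU, addU]; omega
    · simp [subU, addU, Function.update_of_ne h]

lemma w_addU (hp : ∀ i, 0 < p i) (hμc : ∀ i, 0 < μc i) (hμd : ∀ i, 0 < μd i)
    (hμu : ∀ i, 0 < μu i) (x : St n) (j : Fin n) :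
    μu j * ((x.u j : ℝ) + 1) * w p μc μd μu (addU x j) = p j * w p μc μd μu x := by
  classical
  set G : Fin n → ℕ → ℝ := fun i m =>
    (p i / μc i) ^ x.c i *
      ((p i / μd i) ^ x.d i / (Nat.factorial (x.d i) : ℝ)) *
      ((p i / μu i) ^ m / (Nat.factorial m : ℝ)) with hG
  have hw : w p μc μd μu x = G j (x.u j) * ∏ i ∈ Finset.univ.erase j, G i (x.u i) :=
    (Finset.mul_prod_erase Finset.univ (fun i => G i (x.u i)) (Finset.mem_univ j)).symm
  have hw' : w p μc μd μu (addU x j)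
      = G j (x.u j + 1) * ∏ i ∈ Finset.univ.erase j, G i (x.u i) := by
    unfold St.w
    show (∏ i, G i (Function.update x.u j (x.u j + 1) i)) = _
    rw [← Finset.mul_prod_erase Finset.univ _ (Finset.mem_univ j)]
    rw [Function.update_self]
    congr 1
    apply Finset.prod_congr rfl
    intro i hi
    rw [Function.update_of_ne (Finset.mem_erase.mp hi).1]
  rw [hw, hw']
  have key : μu j * ((x.u j : ℝ) + 1) * G j (x.u j + 1) = p j * G j (x.u j) := by
    simp only [hG, Nat.factorial_succ, pow_succ, Nat.cast_mul, Nat.cast_add, Nat.cast_one]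
    have h1 : (μu j) ≠ 0 := ne_of_gt (hμu j)
    have h1' : (μc j) ≠ 0 := ne_of_gt (hμc j)
    have h1'' : (μd j) ≠ 0 := ne_of_gt (hμd j)
    have h2 : ((x.u j : ℝ) + 1) ≠ 0 := by positivity
    have h3 : (Nat.factorial (x.u j) : ℝ) ≠ 0 := by positivity
    have h4 : (Nat.factorial (x.d j) : ℝ) ≠ 0 := by positivity
    field_simp
  calc μu j * ((x.u j : ℝ) + 1) * (G j (x.u j + 1) * ∏ i ∈ Finset.univ.erase j, G i (x.u i))
      = (μu j * ((x.u j : ℝ) + 1) * G j (x.u j + 1)) * ∏ i ∈ Finset.univ.erase j, G i (x.u i) := by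
        ring
    _ = (p j * G j (x.u j)) * ∏ i ∈ Finset.univ.erase j, G i (x.u i) := by rw [key]
    _ = p j * (G j (x.u j) * ∏ i ∈ Finset.univ.erase j, G i (x.u i)) := by ring

lemma sum_uw (hp : ∀ i, 0 < p i) (hμc : ∀ i, 0 < μc i) (hμd : ∀ i, 0 < μd i)
    (hμu : ∀ i, 0 < μu i) (k : ℕ) (j : Fin n) :
    ∑ y ∈ S n (k+1), μu j * (y.u j : ℝ) * w p μc μd μu y
      = p j * Z p μc μd μu (k : ℤ) := by
  classical
  rw [Z_eq, Finset.mul_sum]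
  rw [← Finset.sum_filter_of_ne (p := fun y : St n => 1 ≤ y.u j)
    (fun y _ h => by
      by_contra hc
      push_neg at hc
      have h0 : y.u j = 0 := by omega
      simp [h0] at h)]
  refine (Finset.sum_nbij' (fun x => addU x j) (fun y => subU y j) ?_ ?_ ?_ ?_ ?_).symm
  · intro a ha
    rw [Finset.mem_filter]
    constructor
    · rw [mem_S, total_addU, mem_S.mp ha]
    · show 1 ≤ (addU a j).u j
      simp [addU]
  · intro b hb
    rw [Finset.mem_filter] at hb
    show subU b j ∈ S n k
    rw [mem_S]
    have h1 : 1 ≤ b.u j := hb.2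
    have := total_subU' b j h1
    have h2 := mem_S.mp hb.1
    omega
  · intro a _; exact subU_addU a j
  · intro b hb
    rw [Finset.mem_filter] at hb
    exact addU_subU b j hb.2
  · intro a _
    have h1 : (addU a j).u j = a.u j + 1 := by simp [addU]
    rw [h1]
    push_cast
    exact (w_addU hp hμc hμd hμu a j).symm

lemma numer (hp : ∀ i, 0 < p i) (hpsum : ∑ i, p i = 1) (hμc : ∀ i, 0 < μc i)
    (hμd : ∀ i, 0 < μd i) (hμu : ∀ i, 0 < μu i) (k : ℕ) (x : St n) :
    (∑ j, μu j * ((x.u j : ℝ) + 1) * pd p μc μd μu ((k:ℤ)+1) (addU x j))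
      = w p μc μd μu x / Z p μc μd μu ((k:ℤ)+1) := by
  simp only [St.pd, ← mul_div_assoc]
  rw [← Finset.sum_div]
  congr 1
  have : ∀ j : Fin n, μu j * ((x.u j : ℝ) + 1) * w p μc μd μu (addU x j)
      = p j * w p μc μd μu x := fun j => w_addU hp hμc hμd hμu x j
  rw [Finset.sum_congr rfl (fun j _ => this j), ← Finset.sum_mul, hpsum, one_mul]

lemma denom (hn : 1 ≤ n) (hp : ∀ i, 0 < p i) (hpsum : ∑ i, p i = 1) (hμc : ∀ i, 0 < μc i)
    (hμd : ∀ i, 0 < μd i) (hμu : ∀ i, 0 < μu i) (k : ℕ) :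
    (∑' y : St n, if y.total = k + 1 then (∑ j, μu j * (y.u j : ℝ)) * pd p μc μd μu ((k:ℤ)+1) y else 0)
      = Z p μc μd μu (k : ℤ) / Z p μc μd μu ((k:ℤ)+1) := by
  classical
  rw [tsum_cond]
  simp only [St.pd, ← mul_div_assoc]
  rw [← Finset.sum_div]
  congr 1
  have step : ∀ y ∈ S n (k+1), (∑ j, μu j * (y.u j : ℝ)) * w p μc μd μu y
      = ∑ j, μu j * (y.u j : ℝ) * w p μc μd μu y := fun y _ => Finset.sum_mul _ _ _
  rw [Finset.sum_congr rfl step, Finset.sum_comm]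
  have step2 : ∀ j : Fin n, (∑ y ∈ S n (k+1), μu j * (y.u j : ℝ) * w p μc μd μu y)
      = p j * Z p μc μd μu (k : ℤ) := fun j => sum_uw hp hμc hμd hμu k j
  rw [Finset.sum_congr rfl (fun j _ => step2 j), ← Finset.sum_mul, hpsum, one_mul]

end StAux

open StAux

/-- The embedded chain observed at uplink service completions has stationary distribution
`π_{m-1}`: (i) the numerator identity, (ii) the denominator identity, and the resulting
ratio equals `π_{m-1}(x)`. -/
theorem stmt1 (n m : ℕ) (hn : 1 ≤ n) (hm : 1 ≤ m)
    (p μc μd μu : Fin n → ℝ)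
    (hp : ∀ i, 0 < p i) (hpsum : ∑ i, p i = 1)
    (hμc : ∀ i, 0 < μc i) (hμd : ∀ i, 0 < μd i) (hμu : ∀ i, 0 < μu i)
    (x : St n) (hx : (x.total : ℤ) = (m : ℤ) - 1) :
    (∑ j, μu j * ((x.u j : ℝ) + 1) * pd p μc μd μu (m : ℤ) (addU x j)) =
        Z p μc μd μu ((m : ℤ) - 1) / Z p μc μd μu (m : ℤ) * pd p μc μd μu ((m : ℤ) - 1) x ∧
    (∑' y : St n, if y.total = m then (∑ j, μu j * (y.u j : ℝ)) * pd p μc μd μu (m : ℤ) y else 0) =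
        Z p μc μd μu ((m : ℤ) - 1) / Z p μc μd μu (m : ℤ) ∧
    (∑ j, μu j * ((x.u j : ℝ) + 1) * pd p μc μd μu (m : ℤ) (addU x j)) /
        (∑' y : St n,
          if y.total = m then (∑ j, μu j * (y.u j : ℝ)) * pd p μc μd μu (m : ℤ) y else 0) =
      pd p μc μd μu ((m : ℤ) - 1) x := by
  obtain ⟨k, rfl⟩ : ∃ k, m = k + 1 := ⟨m - 1, (Nat.succ_pred_eq_of_pos hm).symm⟩
  have e1 : ((k + 1 : ℕ) : ℤ) - 1 = (k : ℤ) := by push_cast; ring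
  have e2 : ((k + 1 : ℕ) : ℤ) = (k : ℤ) + 1 := by push_cast; ring
  rw [e1, e2]
  have hZk : 0 < Z p μc μd μu (k : ℤ) := Z_pos hn hp hμc hμd hμu k
  have hZk1 : 0 < Z p μc μd μu ((k:ℤ)+1) := by
    have := Z_pos hn hp hμc hμd hμu (k+1) (p := p) (μc := μc) (μd := μd) (μu := μu)
    rwa [e2] at this
  have hnum := numer hp hpsum hμc hμd hμu k x (μc := μc) (μd := μd)
  have hden := denom hn hp hpsum hμc hμd hμu k (μc := μc) (μd := μd)
  refine ⟨?_, hden, ?_⟩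
  · rw [hnum]
    simp only [St.pd]
    field_simp
  · rw [hnum, hden]
    simp only [St.pd]
    field_simp
end

section
/- Define the array U recursively by: U(r, 0) = 1 for r ∈ {1,…,3n}; U(1, j) = (p_1/μ^c_1)^j for j ∈ {0,…,m}; U(r, j) = U(r−1, j) + (p_r/μ^c_r) · U(r, j−1) for r ∈ {2,…,n} and j ∈ {1,…,m}; U(r, j) = Σ_{k=0}^{j} (1/k!) (p_{r−n}/μ^d_{r−n})^k · U(r−1, j−k) for r ∈ {n+1,…,2n} and j ∈ {1,…,m}; and U(r, j) = Σ_{k=0}^{j} (1/k!) (p_{r−2n}/μ^u_{r−2n})^k · U(r−1, j−k) for r ∈ {2n+1,…,3n} and j ∈ {1,…,m}. Then Z(j) = U(3n, j) for every j ∈ {0, 1, …, m}. -/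
open scoped BigOperators

open St

/-!
The weight of a state factorizes over the `3n` servers, so `Z(j)` is the `j`-th coefficient of the
product of the servers' generating functions: `∑ₖ aᵏ Xᵏ = (1 - aX)⁻¹` for a computation server and
`∑ₖ aᵏ/k! Xᵏ = exp(aX)` for a downlink or uplink server, with `a = pᵢ/μᵢ`. The array `U(r, ·)` is
the coefficient sequence of the product of the first `r` factors: multiplying by `exp(aX)` is a
convolution, and multiplying by `(1 - aX)⁻¹` gives the recursion `U(r, j) = U(r-1, j) + a U(r, j-1)`.
-/

open Finset PowerSeries

namespace PowerSeries

variable {R : Type*} [CommSemiring R]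

theorem coeff_prod_univ_eq_tsum {ι : Type*} [Fintype ι] [DecidableEq ι] [TopologicalSpace R]
    (G : ι → R⟦X⟧) (d : ℕ) :
    coeff d (∏ i, G i) = ∑' y : ι → ℕ, if ∑ i, y i = d then ∏ i, coeff (y i) (G i) else 0 := by
  rw [coeff_prod, tsum_eq_sum (s := piAntidiag univ d)]
  · rw [finsuppAntidiag, sum_map, ← sum_attach (piAntidiag univ d)]
    refine sum_congr rfl fun y _ => ?_
    rw [if_pos (by simpa using (mem_piAntidiag.1 y.2).1)]
    rfl
  · intro y hy
    rw [if_neg]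
    simpa using hy

theorem coeff_mk_mul (g : ℕ → R) (P : R⟦X⟧) (j : ℕ) :
    coeff j (mk g * P) = ∑ k ∈ range (j + 1), g k * coeff (j - k) P := by
  rw [coeff_mul, Nat.sum_antidiagonal_eq_sum_range_succ (fun a b => coeff a (mk g) * coeff b P)]
  simp only [coeff_mk]

end PowerSeries

namespace Buzen

variable {R : Type*}

section CommSemiring

variable [CommSemiring R]

def geomSeries (a : R) : R⟦X⟧ := mk fun k => a ^ k

theorem geomSeries_eq (a : R) : geomSeries a = 1 + C a * X * geomSeries a := by
  ext (_ | k) <;> simp [geomSeries, coeff_one, mul_assoc, coeff_succ_X_mul, pow_succ']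

theorem coeff_succ_geomSeries_mul (a : R) (P : R⟦X⟧) (j : ℕ) :
    coeff (j + 1) (geomSeries a * P) = coeff (j + 1) P + a * coeff j (geomSeries a * P) := by
  conv_lhs => rw [geomSeries_eq, add_mul, one_mul, mul_assoc, mul_assoc]
  rw [map_add, coeff_C_mul, coeff_succ_X_mul]

theorem coeff_zero_geomSeries_mul (a : R) (P : R⟦X⟧) :
    coeff 0 (geomSeries a * P) = coeff 0 P := by
  simp [geomSeries, coeff_zero_eq_constantCoeff]

theorem eq_coeff_geomSeries_mul {m : ℕ} {V W : ℕ → R} {P : R⟦X⟧} (a : R)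
    (hV : ∀ j ≤ m, V j = coeff j P) (h0 : W 0 = V 0)
    (hW : ∀ j, 1 ≤ j → j ≤ m → W j = V j + a * W (j - 1)) :
    ∀ j ≤ m, W j = coeff j (geomSeries a * P) := by
  intro j
  induction j with
  | zero => intro h; rw [h0, hV 0 h, coeff_zero_geomSeries_mul]
  | succ j ih =>
    intro hj
    rw [hW (j + 1) (by omega) hj, coeff_succ_geomSeries_mul, hV (j + 1) hj, Nat.add_sub_cancel,
      ih (by omega)]

end CommSemiring

section Semifield

variable [Semifield R]

def poissonSeries (a : R) : R⟦X⟧ := mk fun k => a ^ k / k.factorial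

theorem eq_coeff_poissonSeries_mul {m : ℕ} {V W : ℕ → R} {P : R⟦X⟧} (a : R)
    (hV : ∀ j ≤ m, V j = coeff j P) (h0 : W 0 = V 0)
    (hW : ∀ j, 1 ≤ j → j ≤ m →
      W j = ∑ k ∈ range (j + 1), 1 / (k.factorial : R) * a ^ k * V (j - k)) :
    ∀ j ≤ m, W j = coeff j (poissonSeries a * P) := by
  intro j hj
  have hconv : W j = ∑ k ∈ range (j + 1), 1 / (k.factorial : R) * a ^ k * V (j - k) := by
    rcases Nat.eq_zero_or_pos j with rfl | hj1
    · simp [h0]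
    · exact hW j hj1 hj
  rw [hconv, poissonSeries, coeff_mk_mul]
  refine sum_congr rfl fun k _ => ?_
  rw [hV (j - k) (by omega)]
  ring

end Semifield

variable {n : ℕ}

noncomputable def clientSeries (p μc μd μu : Fin n → ℝ) (i : Fin n) : Fin 3 → ℝ⟦X⟧ :=
  ![geomSeries (p i / μc i), poissonSeries (p i / μd i), poissonSeries (p i / μu i)]

def stEquiv : St n ≃ (Fin n × Fin 3 → ℕ) where
  toFun x s := ![x.c, x.d, x.u] s.2 s.1
  invFun y := ⟨fun i => y (i, 1), fun i => y (i, 0), fun i => y (i, 2)⟩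
  left_inv _ := rfl
  right_inv y := by
    funext ⟨i, b⟩
    fin_cases b <;> rfl

theorem total_eq_sum_stEquiv (x : St n) : total x = ∑ s, stEquiv x s := by
  rw [total, Fintype.sum_prod_type]
  refine sum_congr rfl fun i _ => ?_
  simp [Fin.sum_univ_three, stEquiv, add_comm (x.d i)]

variable (p μc μd μu : Fin n → ℝ)

theorem w_eq_prod_coeff (x : St n) :
    w p μc μd μu x = ∏ s, coeff (stEquiv x s) (clientSeries p μc μd μu s.1 s.2) := by
  simp [w, Fintype.prod_prod_type, Fin.prod_univ_three, stEquiv, clientSeries, geomSeries,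
    poissonSeries]

theorem Z_eq_coeff (j : ℕ) :
    Z p μc μd μu j = coeff j (∏ s : Fin n × Fin 3, clientSeries p μc μd μu s.1 s.2) := by
  rw [coeff_prod_univ_eq_tsum, Z, ← stEquiv.symm.tsum_eq]
  refine tsum_congr fun y => ?_
  simp only [w_eq_prod_coeff, total_eq_sum_stEquiv, Nat.cast_inj, Equiv.apply_symm_apply]

noncomputable def serverSeries (r : ℕ) : ℝ⟦X⟧ :=
  if h : r < n then clientSeries p μc μd μu ⟨r, h⟩ 0
  else if h' : r < 2 * n then clientSeries p μc μd μu ⟨r - n, by omega⟩ 1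
  else if h'' : r < 3 * n then clientSeries p μc μd μu ⟨r - 2 * n, by omega⟩ 2
  else 1

theorem serverSeries_val (i : Fin n) :
    serverSeries p μc μd μu i = clientSeries p μc μd μu i 0 :=
  dif_pos i.isLt

theorem serverSeries_add_val (i : Fin n) :
    serverSeries p μc μd μu (n + i) = clientSeries p μc μd μu i 1 := by
  rw [serverSeries, dif_neg (by omega), dif_pos (by omega)]
  simp

theorem serverSeries_two_mul_add_val (i : Fin n) :
    serverSeries p μc μd μu (2 * n + i) = clientSeries p μc μd μu i 2 := by
  rw [serverSeries, dif_neg (by omega), dif_neg (by omega), dif_pos (by omega)]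
  simp

theorem prod_range_serverSeries :
    ∏ r ∈ range (3 * n), serverSeries p μc μd μu r =
      ∏ s : Fin n × Fin 3, clientSeries p μc μd μu s.1 s.2 := by
  rw [show 3 * n = n + n + n by ring, prod_range_add, prod_range_add, Fintype.prod_prod_type]
  simp only [← Fin.prod_univ_eq_prod_range, Fin.prod_univ_three, prod_mul_distrib,
    serverSeries_val, serverSeries_add_val, ← two_mul, serverSeries_two_mul_add_val]

theorem exists_eq_of_lt_three_mul {r : ℕ} (hr : r < 3 * n) :
    (∃ i : Fin n, r = i) ∨ (∃ i : Fin n, r = n + i) ∨ ∃ i : Fin n, r = 2 * n + i := by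
  by_cases h₁ : r < n
  · exact Or.inl ⟨⟨r, h₁⟩, rfl⟩
  by_cases h₂ : r < 2 * n
  · exact Or.inr (Or.inl ⟨⟨r - n, by omega⟩, (Nat.add_sub_cancel' (by omega)).symm⟩)
  · exact Or.inr (Or.inr ⟨⟨r - 2 * n, by omega⟩, (Nat.add_sub_cancel' (by omega)).symm⟩)

end Buzen

open Buzen

theorem stmt3_general (n m : ℕ) (hn : 1 ≤ n)
    (p μc μd μu : Fin n → ℝ)
    (U : ℕ → ℕ → ℝ)
    (h0 : ∀ r, 1 ≤ r → r ≤ 3 * n → U r 0 = 1)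
    (h1 : ∀ j ≤ m, U 1 j = (p ⟨0, hn⟩ / μc ⟨0, hn⟩) ^ j)
    (hc : ∀ i : Fin n, 1 ≤ (i : ℕ) → ∀ j, 1 ≤ j → j ≤ m →
      U ((i : ℕ) + 1) j = U (i : ℕ) j + (p i / μc i) * U ((i : ℕ) + 1) (j - 1))
    (hd : ∀ i : Fin n, ∀ j, 1 ≤ j → j ≤ m →
      U (n + (i : ℕ) + 1) j =
        ∑ k ∈ Finset.range (j + 1),
          (1 / (Nat.factorial k : ℝ)) * (p i / μd i) ^ k * U (n + (i : ℕ)) (j - k))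
    (hu : ∀ i : Fin n, ∀ j, 1 ≤ j → j ≤ m →
      U (2 * n + (i : ℕ) + 1) j =
        ∑ k ∈ Finset.range (j + 1),
          (1 / (Nat.factorial k : ℝ)) * (p i / μu i) ^ k * U (2 * n + (i : ℕ)) (j - k)) :
    ∀ j ≤ m, Z p μc μd μu (j : ℤ) = U (3 * n) j := by
  set P := fun r => ∏ k ∈ range r, serverSeries p μc μd μu k
  have hU : ∀ r, 1 ≤ r → r ≤ 3 * n → ∀ j ≤ m, U r j = coeff j (P r) := by
    intro r hr
    induction r, hr using Nat.le_induction with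
    | base =>
      intro _ j hj
      rw [h1 j hj, show P 1 = _ from prod_range_one _, serverSeries_val p μc μd μu ⟨0, hn⟩]
      exact (coeff_mk _ _).symm
    | succ r hr ih =>
      intro hr3
      have hU0 : U (r + 1) 0 = U r 0 := by rw [h0 _ (by omega) hr3, h0 _ hr (by omega)]
      simp only [P, prod_range_succ_comm]
      rcases exists_eq_of_lt_three_mul hr3 with ⟨i, rfl⟩ | ⟨i, rfl⟩ | ⟨i, rfl⟩
      · rw [serverSeries_val]
        exact eq_coeff_geomSeries_mul _ (ih (by omega)) hU0 (hc i hr)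
      · rw [serverSeries_add_val]
        exact eq_coeff_poissonSeries_mul _ (ih (by omega)) hU0 (hd i)
      · rw [serverSeries_two_mul_add_val]
        exact eq_coeff_poissonSeries_mul _ (ih (by omega)) hU0 (hu i)
  intro j hj
  rw [Z_eq_coeff, ← prod_range_serverSeries]
  exact (hU (3 * n) (by omega) le_rfl j hj).symm

/-- Buzen's recursive algorithm computes the normalization constants:
if `U` satisfies the recursion, then `Z(j) = U(3n, j)` for every `j ∈ {0,…,m}`. -/
theorem stmt3 (n m : ℕ) (hn : 1 ≤ n) (hm : 1 ≤ m)
    (p μc μd μu : Fin n → ℝ)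
    (hp : ∀ i, 0 < p i)
    (hμc : ∀ i, 0 < μc i) (hμd : ∀ i, 0 < μd i) (hμu : ∀ i, 0 < μu i)
    (U : ℕ → ℕ → ℝ)
    (h0 : ∀ r, 1 ≤ r → r ≤ 3 * n → U r 0 = 1)
    (h1 : ∀ j ≤ m, U 1 j = (p ⟨0, hn⟩ / μc ⟨0, hn⟩) ^ j)
    (hc : ∀ i : Fin n, 1 ≤ (i : ℕ) → ∀ j, 1 ≤ j → j ≤ m →
      U ((i : ℕ) + 1) j = U (i : ℕ) j + (p i / μc i) * U ((i : ℕ) + 1) (j - 1))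
    (hd : ∀ i : Fin n, ∀ j, 1 ≤ j → j ≤ m →
      U (n + (i : ℕ) + 1) j =
        ∑ k ∈ Finset.range (j + 1),
          (1 / (Nat.factorial k : ℝ)) * (p i / μd i) ^ k * U (n + (i : ℕ)) (j - k))
    (hu : ∀ i : Fin n, ∀ j, 1 ≤ j → j ≤ m →
      U (2 * n + (i : ℕ) + 1) j =
        ∑ k ∈ Finset.range (j + 1),
          (1 / (Nat.factorial k : ℝ)) * (p i / μu i) ^ k * U (2 * n + (i : ℕ)) (j - k)) :
    ∀ j ≤ m, Z p μc μd μu (j : ℤ) = U (3 * n) j :=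
  stmt3_general n m hn p μc μd μu U h0 h1 hc hd hu
end

section
/- For every i ∈ {1,…,n} and every integer k with 0 ≤ k ≤ m−1, the tail probability of the i-th computation queue under π_{m−1} satisfies Σ_{x ∈ X(m−1), x^c_i ≥ k} π_{m−1}(x) = (p_i/μ^c_i)^k · Z(m−1−k)/Z(m−1). -/
open scoped BigOperators

open St

/-- Tail probability of the `i`-th computation queue under `π_{m-1}`:
`Pr(x^c_i ≥ k) = (p_i/μ^c_i)^k · Z(m-1-k)/Z(m-1)`. -/
theorem stmt4 (n m : ℕ) (hn : 1 ≤ n) (hm : 1 ≤ m)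
    (p μc μd μu : Fin n → ℝ)
    (hp : ∀ i, 0 < p i)
    (hμc : ∀ i, 0 < μc i) (hμd : ∀ i, 0 < μd i) (hμu : ∀ i, 0 < μu i)
    (i : Fin n) (k : ℕ) (hk : (k : ℤ) ≤ (m : ℤ) - 1) :
    (∑' x : St n,
        if (x.total : ℤ) = (m : ℤ) - 1 ∧ k ≤ x.c i then pd p μc μd μu ((m : ℤ) - 1) x else 0) =
      (p i / μc i) ^ k * (Z p μc μd μu ((m : ℤ) - 1 - k) / Z p μc μd μu ((m : ℤ) - 1)) := by
  classical
  set C : ℝ := (p i / μc i) ^ k with hC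
  set f : St n → St n := fun y => ⟨y.d, Function.update y.c i (y.c i + k), y.u⟩ with hf
  have hfc : ∀ y, (f y).c i = y.c i + k := by
    intro y; simp [hf]
  have h_total : ∀ y : St n, (f y).total = y.total + k := by
    intro y
    have hpt : ∀ j, (f y).d j + (f y).c j + (f y).u j =
        Function.update (fun j => y.d j + y.c j + y.u j) i
          (y.d i + y.c i + y.u i + k) j := by
      intro j
      rcases eq_or_ne j i with rfl | h
      · simp [hf, Function.update_self]; omega
      · simp [hf, Function.update_of_ne h]
    unfold St.total
    rw [Finset.sum_congr rfl (fun j _ => hpt j),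
      Finset.sum_update_of_mem (Finset.mem_univ i)]
    have := Finset.sum_eq_sum_sdiff_singleton_add (Finset.mem_univ i)
      (fun j => y.d j + y.c j + y.u j)
    omega
  have h_w : ∀ y : St n, w p μc μd μu (f y) = C * w p μc μd μu y := by
    intro y
    have hpt : ∀ j, ((p j / μc j) ^ (f y).c j *
        ((p j / μd j) ^ (f y).d j / (Nat.factorial ((f y).d j) : ℝ)) *
        ((p j / μu j) ^ (f y).u j / (Nat.factorial ((f y).u j) : ℝ))) =
        Function.update (fun j => (p j / μc j) ^ y.c j *
          ((p j / μd j) ^ y.d j / (Nat.factorial (y.d j) : ℝ)) *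
          ((p j / μu j) ^ y.u j / (Nat.factorial (y.u j) : ℝ))) i
          (C * ((p i / μc i) ^ y.c i *
            ((p i / μd i) ^ y.d i / (Nat.factorial (y.d i) : ℝ)) *
            ((p i / μu i) ^ y.u i / (Nat.factorial (y.u i) : ℝ)))) j := by
      intro j
      rcases eq_or_ne j i with rfl | h
      · simp only [hf, Function.update_self, hC]
        rw [pow_add]; ring
      · simp [hf, Function.update_of_ne h]
    unfold St.w
    rw [Finset.prod_congr rfl (fun j _ => hpt j),
      Finset.prod_update_of_mem (Finset.mem_univ i),
      Finset.prod_eq_prod_diff_singleton_mul (Finset.mem_univ i)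
        (fun j => (p j / μc j) ^ y.c j *
          ((p j / μd j) ^ y.d j / (Nat.factorial (y.d j) : ℝ)) *
          ((p j / μu j) ^ y.u j / (Nat.factorial (y.u j) : ℝ)))]
    ring
  have hinj : Function.Injective f := by
    intro a b h
    simp only [hf, St.mk.injEq] at h
    obtain ⟨hd, hc, hu⟩ := h
    have hc' : a.c = b.c := by
      funext j
      rcases eq_or_ne j i with rfl | hj
      · have := congrFun hc j
        simp [Function.update_self] at this
        omega
      · have := congrFun hc j
        simpa [Function.update_of_ne hj] using this
    cases a; cases b; simp_all
  set g : St n → ℝ := fun x =>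
    if (x.total : ℤ) = (m : ℤ) - 1 ∧ k ≤ x.c i then w p μc μd μu x else 0 with hg
  have hsupp : Function.support g ⊆ Set.range f := by
    intro x hx
    simp only [hg, Function.mem_support, ne_eq, ite_eq_right_iff, not_forall] at hx
    obtain ⟨⟨-, hki⟩, -⟩ := hx
    refine ⟨⟨x.d, Function.update x.c i (x.c i - k), x.u⟩, ?_⟩
    simp only [hf, St.mk.injEq]
    rw [Function.update_self, Function.update_idem, Nat.sub_add_cancel hki,
      Function.update_eq_self]
  have hgf : ∀ y, g (f y) = C * (if ((y.total : ℤ) = (m : ℤ) - 1 - k) then w p μc μd μu y else 0) := by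
    intro y
    simp only [hg, h_total, hfc, Function.update_self]
    by_cases hy : (y.total : ℤ) = (m : ℤ) - 1 - k
    · rw [if_pos, if_pos hy, h_w]
      constructor
      · push_cast; omega
      · omega
    · rw [if_neg, if_neg hy, mul_zero]
      rintro ⟨h1, -⟩
      apply hy
      push_cast at h1 ⊢
      omega
  have key : (∑' x : St n, g x) = C * Z p μc μd μu ((m : ℤ) - 1 - k) := by
    rw [← hinj.tsum_eq hsupp]
    calc ∑' y, g (f y) = ∑' y, C * (if ((y.total : ℤ) = (m : ℤ) - 1 - k)
          then w p μc μd μu y else 0) := by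
          exact tsum_congr hgf
      _ = C * Z p μc μd μu ((m : ℤ) - 1 - k) := by
          rw [tsum_mul_left]; rfl
  have hpd : ∀ x : St n,
      (if (x.total : ℤ) = (m : ℤ) - 1 ∧ k ≤ x.c i then pd p μc μd μu ((m : ℤ) - 1) x else 0) =
      g x / Z p μc μd μu ((m : ℤ) - 1) := by
    intro x
    simp only [hg, pd]
    split_ifs <;> simp
  rw [tsum_congr hpd, tsum_div_const, key, mul_div_assoc]
end

section
/- For every i ∈ {1,…,n}, the expected total number of tasks of client i under π_{m−1} satisfies E_{π_{m−1}}[x^c_i + x^d_i + x^u_i] = β_{i,1} + γ_i · Z(m−2)/Z(m−1), where β_{i,1} = Σ_{k=1}^{m−1} (p_i/μ^c_i)^k · Z(m−1−k)/Z(m−1) and γ_i = p_i (1/μ^d_i + 1/μ^u_i). In particular E_{π_{m−1}}[x^c_i] = β_{i,1}, E_{π_{m−1}}[x^d_i] = (p_i/μ^d_i) · Z(m−2)/Z(m−1), and E_{π_{m−1}}[x^u_i] = (p_i/μ^u_i) · Z(m−2)/Z(m−1). -/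
open scoped BigOperators

open St

/-!
Moving `k` tasks into the computation queue of client `i` multiplies the weight by
`(p_i/μ^c_i)^k`, so the states of level `N` with `x^c_i ≥ k` have total weight
`(p_i/μ^c_i)^k Z(N-k)`; summing over `k = 1, …, N` gives `E[x^c_i]`, since
`x^c_i = #{k ∈ [1, N] | k ≤ x^c_i}`. At the infinite-server stations the factorial gives
`x^d_i w(x) = (p_i/μ^d_i) w(x - e_i)`, hence `E[x^d_i] = (p_i/μ^d_i) Z(N-1)/Z(N)`, and the
uplink case is the downlink case with the roles of `d` and `u` exchanged.
-/

theorem tsum_level_comp {α : Type*} {t : α → ℤ} {b : α → α} (hb : Function.Injective b)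
    {k : ℤ} (ht : ∀ x, t (b x) = t x + k) {g : α → ℝ} (hg : ∀ y, g y ≠ 0 → y ∈ Set.range b)
    (N : ℤ) :
    (∑' y, if t y = N then g y else 0) = ∑' x, if t x = N - k then g (b x) else 0 := by
  rw [← hb.tsum_eq (f := fun y => if t y = N then g y else 0)]
  · refine tsum_congr fun x => ?_
    simp only [ht, eq_sub_iff_add_eq]
  · intro y hy
    by_cases hN : t y = N <;> simp_all

theorem prod_eq_mul_prod_of_ne {ι : Type*} [Fintype ι] [DecidableEq ι] {F G : ι → ℝ} {i : ι}
    {a : ℝ} (h : ∀ j ≠ i, F j = G j) (hi : F i = a * G i) : ∏ j, F j = a * ∏ j, G j := by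
  rw [Fintype.prod_eq_mul_prod_compl i, Fintype.prod_eq_mul_prod_compl i G, hi, mul_assoc,
    Finset.prod_congr rfl fun j hj => h j (Finset.mem_compl.1 hj ∘ Finset.mem_singleton.2)]

theorem pow_succ_div_factorial_succ (a : ℝ) (k : ℕ) :
    a ^ (k + 1) / (k + 1).factorial = a / (k + 1) * (a ^ k / k.factorial) := by
  rw [Nat.factorial_succ, Nat.cast_mul, pow_succ]
  push_cast
  field_simp

theorem sum_Icc_ite_le {c N : ℕ} (h : c ≤ N) (a : ℝ) :
    ∑ k ∈ Finset.Icc 1 N, (if k ≤ c then a else 0) = c * a := by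
  rw [← Finset.sum_filter, Finset.sum_const, nsmul_eq_mul]
  congr
  have : (Finset.Icc 1 N).filter (· ≤ c) = Finset.Icc 1 c := by
    ext k
    simp only [Finset.mem_filter, Finset.mem_Icc]
    omega
  simp [this]

theorem tsub_single_add_single {ι : Type*} [DecidableEq ι] (f : ι → ℕ) {i : ι} {k : ℕ}
    (h : k ≤ f i) : f - Pi.single i k + Pi.single i k = f := by
  ext j
  rcases eq_or_ne j i with rfl | hj
  · simp only [Pi.add_apply, Pi.sub_apply, Pi.single_eq_same]
    omega
  · simp [hj]

namespace St

variable {n : ℕ}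

theorem d_add_c_add_u_le_total (x : St n) (j : Fin n) : x.d j + x.c j + x.u j ≤ x.total :=
  Finset.single_le_sum (f := fun j => x.d j + x.c j + x.u j) (fun _ _ => Nat.zero_le _)
    (Finset.mem_univ j)

theorem finite_setOf_total_eq (N : ℕ) : {x : St n | x.total = N}.Finite := by
  have hinj : Function.Injective fun x : St n => (x.d, x.c, x.u) := by
    rintro ⟨⟩ ⟨⟩ h
    simpa using h
  have hbox := Set.finite_Iic fun _ : Fin n => N
  refine ((hbox.prod (hbox.prod hbox)).preimage hinj.injOn).subset fun x (hx : x.total = N) => ?_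
  have hle := fun j => hx ▸ x.d_add_c_add_u_le_total j
  simp only [Set.mem_preimage, Set.mem_prod, Set.mem_Iic, Pi.le_def]
  exact ⟨fun j => by grind, fun j => by grind, fun j => by grind⟩

theorem summable_level (N : ℤ) (g : St n → ℝ) :
    Summable fun x : St n => if (x.total : ℤ) = N then g x else 0 := by
  refine summable_of_hasFiniteSupport ((finite_setOf_total_eq N.toNat).subset fun x hx => ?_)
  by_cases h : (x.total : ℤ) = N
  · show x.total = N.toNat
    omega
  · simp [h] at hx

def addC (i : Fin n) (k : ℕ) (x : St n) : St n := ⟨x.d, x.c + Pi.single i k, x.u⟩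

def addD (i : Fin n) (x : St n) : St n := ⟨x.d + Pi.single i 1, x.c, x.u⟩

theorem addC_injective (i : Fin n) (k : ℕ) : Function.Injective (addC i k) := by
  rintro ⟨⟩ ⟨⟩ h
  simpa [addC] using h

theorem addD_injective (i : Fin n) : Function.Injective (addD i) := by
  rintro ⟨⟩ ⟨⟩ h
  simpa [addD] using h

theorem mem_range_addC {i : Fin n} {k : ℕ} {y : St n} (h : k ≤ y.c i) :
    y ∈ Set.range (addC i k) :=
  ⟨⟨y.d, y.c - Pi.single i k, y.u⟩, by simp [addC, tsub_single_add_single _ h]⟩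

theorem mem_range_addD {i : Fin n} {y : St n} (h : 1 ≤ y.d i) : y ∈ Set.range (addD i) :=
  ⟨⟨y.d - Pi.single i 1, y.c, y.u⟩, by simp [addD, tsub_single_add_single _ h]⟩

theorem total_addC (i : Fin n) (k : ℕ) (x : St n) : (x.addC i k).total = x.total + k := by
  simp only [total, addC, Pi.add_apply, Finset.sum_add_distrib, Finset.sum_pi_single',
    Finset.mem_univ, if_true]
  ring

theorem total_addD (i : Fin n) (x : St n) : (x.addD i).total = x.total + 1 := by
  simp only [total, addD, Pi.add_apply, Finset.sum_add_distrib, Finset.sum_pi_single',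
    Finset.mem_univ, if_true]
  ring

def swapDU (x : St n) : St n := ⟨x.u, x.c, x.d⟩

theorem swapDU_involutive : Function.Involutive (swapDU (n := n)) := fun _ => rfl

theorem total_swapDU (x : St n) : x.swapDU.total = x.total :=
  Finset.sum_congr rfl fun _ _ => by simp only [swapDU]; ring

variable (p μc μd μu : Fin n → ℝ)

theorem w_addC (i : Fin n) (k : ℕ) (x : St n) :
    w p μc μd μu (x.addC i k) = (p i / μc i) ^ k * w p μc μd μu x := by
  refine prod_eq_mul_prod_of_ne (i := i) (fun j hj => by simp [addC, hj]) ?_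
  simp only [addC, Pi.add_apply, Pi.single_eq_same, pow_add]
  ring

theorem d_mul_w_addD (i : Fin n) (x : St n) :
    (x.addD i).d i * w p μc μd μu (x.addD i) = p i / μd i * w p μc μd μu x := by
  have hw : w p μc μd μu (x.addD i) = p i / μd i / (x.d i + 1) * w p μc μd μu x := by
    refine prod_eq_mul_prod_of_ne (i := i) (fun j hj => by simp [addD, hj]) ?_
    simp only [addD, Pi.add_apply, Pi.single_eq_same, pow_succ_div_factorial_succ]
    ring
  rw [hw]
  simp only [addD, Pi.add_apply, Pi.single_eq_same, Nat.cast_add, Nat.cast_one]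
  field_simp

theorem w_swapDU (x : St n) : w p μc μd μu x.swapDU = w p μc μu μd x :=
  Finset.prod_congr rfl fun _ _ => mul_right_comm _ _ _

theorem Z_swapDU : Z p μc μu μd = Z p μc μd μu := funext fun N => by
  rw [Z, Z, ← (swapDU_involutive.toPerm _).tsum_eq]
  simp [total_swapDU, w_swapDU]

theorem tsum_level_d_mul_w (i : Fin n) (N : ℤ) :
    (∑' x : St n, if (x.total : ℤ) = N then (x.d i : ℝ) * w p μc μd μu x else 0) =
      p i / μd i * Z p μc μd μu (N - 1) := by
  rw [tsum_level_comp (addD_injective i) (k := 1) (fun x => by simp [total_addD])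
    (fun y hy => mem_range_addD (Nat.one_le_iff_ne_zero.2 fun h => hy (by simp [h]))) N]
  simp_rw [d_mul_w_addD, Z, ← tsum_mul_left, mul_ite, mul_zero]

theorem tsum_level_u_mul_w (i : Fin n) (N : ℤ) :
    (∑' x : St n, if (x.total : ℤ) = N then (x.u i : ℝ) * w p μc μd μu x else 0) =
      p i / μu i * Z p μc μd μu (N - 1) := by
  rw [← Z_swapDU, ← tsum_level_d_mul_w, ← (swapDU_involutive.toPerm _).tsum_eq]
  simp only [Function.Involutive.coe_toPerm, total_swapDU, w_swapDU]
  rfl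

theorem tsum_level_ite_le_c (i : Fin n) (k : ℕ) (N : ℤ) :
    (∑' x : St n, if (x.total : ℤ) = N then (if k ≤ x.c i then w p μc μd μu x else 0) else 0) =
      (p i / μc i) ^ k * Z p μc μd μu (N - k) := by
  have hle (x : St n) : k ≤ (x.addC i k).c i := by simp [addC]
  rw [tsum_level_comp (addC_injective i k) (k := k) (fun x => by simp [total_addC])
    (fun y hy => mem_range_addC (not_lt.1 fun h => hy (by simp [not_le.2 h]))) N]
  simp_rw [hle, if_true, w_addC, Z, ← tsum_mul_left, mul_ite, mul_zero]

theorem tsum_level_c_mul_w (i : Fin n) (N : ℕ) :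
    (∑' x : St n, if (x.total : ℤ) = N then (x.c i : ℝ) * w p μc μd μu x else 0) =
      ∑ k ∈ Finset.Icc 1 N, (p i / μc i) ^ k * Z p μc μd μu (N - k) := by
  simp_rw [← tsum_level_ite_le_c]
  rw [← Summable.tsum_finsetSum fun k _ => summable_level _ _]
  refine tsum_congr fun x => ?_
  by_cases hx : (x.total : ℤ) = N
  · have hc : x.c i ≤ N := by have := x.d_add_c_add_u_le_total i; omega
    simp only [hx, if_true, sum_Icc_ite_le hc]
  · simp [hx]

theorem Epi_eq_tsum_div (N : ℤ) (f : St n → ℝ) :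
    Epi p μc μd μu N f =
      (∑' x : St n, if (x.total : ℤ) = N then f x * w p μc μd μu x else 0) / Z p μc μd μu N := by
  rw [Epi, ← tsum_div_const]
  refine tsum_congr fun x => ?_
  split_ifs <;> simp [pd, mul_div_assoc]

theorem Epi_add (N : ℤ) (f g : St n → ℝ) :
    Epi p μc μd μu N (f + g) = Epi p μc μd μu N f + Epi p μc μd μu N g := by
  simp only [Epi_eq_tsum_div, ← add_div]
  rw [← (summable_level N _).tsum_add (summable_level N _)]
  congr 1
  refine tsum_congr fun x => ?_
  split_ifs <;> simp [add_mul]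

end St

theorem stmt5_general (n m : ℕ) (hm : 1 ≤ m)
    (p μc μd μu : Fin n → ℝ)
    (i : Fin n) :
    Epi p μc μd μu ((m : ℤ) - 1) (fun x => ((x.c i + x.d i + x.u i : ℕ) : ℝ)) =
        (∑ k ∈ Finset.Icc 1 (m - 1),
          (p i / μc i) ^ k * (Z p μc μd μu ((m : ℤ) - 1 - k) / Z p μc μd μu ((m : ℤ) - 1))) +
        (p i * (1 / μd i + 1 / μu i)) *
          (Z p μc μd μu ((m : ℤ) - 2) / Z p μc μd μu ((m : ℤ) - 1)) ∧
    Epi p μc μd μu ((m : ℤ) - 1) (fun x => (x.c i : ℝ)) =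
        ∑ k ∈ Finset.Icc 1 (m - 1),
          (p i / μc i) ^ k * (Z p μc μd μu ((m : ℤ) - 1 - k) / Z p μc μd μu ((m : ℤ) - 1)) ∧
    Epi p μc μd μu ((m : ℤ) - 1) (fun x => (x.d i : ℝ)) =
        (p i / μd i) * (Z p μc μd μu ((m : ℤ) - 2) / Z p μc μd μu ((m : ℤ) - 1)) ∧
    Epi p μc μd μu ((m : ℤ) - 1) (fun x => (x.u i : ℝ)) =
        (p i / μu i) * (Z p μc μd μu ((m : ℤ) - 2) / Z p μc μd μu ((m : ℤ) - 1)) := by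
  obtain ⟨N, hN, hN'⟩ : ∃ N : ℕ, (m : ℤ) - 1 = N ∧ (m : ℤ) - 2 = N - 1 := ⟨m - 1, by omega⟩
  rw [hN, hN', show m - 1 = N by omega]
  have hc : Epi p μc μd μu N (fun x => (x.c i : ℝ)) =
      ∑ k ∈ Finset.Icc 1 N, (p i / μc i) ^ k * (Z p μc μd μu (N - k) / Z p μc μd μu N) := by
    simp_rw [Epi_eq_tsum_div, tsum_level_c_mul_w, Finset.sum_div, mul_div_assoc]
  have hd : Epi p μc μd μu N (fun x => (x.d i : ℝ)) =
      p i / μd i * (Z p μc μd μu (N - 1) / Z p μc μd μu N) := by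
    rw [Epi_eq_tsum_div, tsum_level_d_mul_w, mul_div_assoc]
  have hu : Epi p μc μd μu N (fun x => (x.u i : ℝ)) =
      p i / μu i * (Z p μc μd μu (N - 1) / Z p μc μd μu N) := by
    rw [Epi_eq_tsum_div, tsum_level_u_mul_w, mul_div_assoc]
  have hsplit : (fun x : St n => ((x.c i + x.d i + x.u i : ℕ) : ℝ)) =
      (fun x => (x.c i : ℝ)) + (fun x => (x.d i : ℝ)) + fun x => (x.u i : ℝ) := by
    ext
    push_cast
    rfl
  refine ⟨?_, hc, hd, hu⟩
  rw [hsplit, Epi_add, Epi_add, hc, hd, hu]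
  ring

/-- Expected number of tasks of client `i` under `π_{m-1}`:
`E[x^c_i + x^d_i + x^u_i] = β_{i,1} + γ_i · Z(m-2)/Z(m-1)`, together with the separate
identities for each of the three components. -/
theorem stmt5 (n m : ℕ) (hn : 1 ≤ n) (hm : 1 ≤ m)
    (p μc μd μu : Fin n → ℝ)
    (hp : ∀ i, 0 < p i)
    (hμc : ∀ i, 0 < μc i) (hμd : ∀ i, 0 < μd i) (hμu : ∀ i, 0 < μu i)
    (i : Fin n) :
    Epi p μc μd μu ((m : ℤ) - 1) (fun x => ((x.c i + x.d i + x.u i : ℕ) : ℝ)) =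
        (∑ k ∈ Finset.Icc 1 (m - 1),
          (p i / μc i) ^ k * (Z p μc μd μu ((m : ℤ) - 1 - k) / Z p μc μd μu ((m : ℤ) - 1))) +
        (p i * (1 / μd i + 1 / μu i)) *
          (Z p μc μd μu ((m : ℤ) - 2) / Z p μc μd μu ((m : ℤ) - 1)) ∧
    Epi p μc μd μu ((m : ℤ) - 1) (fun x => (x.c i : ℝ)) =
        ∑ k ∈ Finset.Icc 1 (m - 1),
          (p i / μc i) ^ k * (Z p μc μd μu ((m : ℤ) - 1 - k) / Z p μc μd μu ((m : ℤ) - 1)) ∧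
    Epi p μc μd μu ((m : ℤ) - 1) (fun x => (x.d i : ℝ)) =
        (p i / μd i) * (Z p μc μd μu ((m : ℤ) - 2) / Z p μc μd μu ((m : ℤ) - 1)) ∧
    Epi p μc μd μu ((m : ℤ) - 1) (fun x => (x.u i : ℝ)) =
        (p i / μu i) * (Z p μc μd μu ((m : ℤ) - 2) / Z p μc μd μu ((m : ℤ) - 1)) :=
  stmt5_general n m hm p μc μd μu i
end

section
/- Assume Σ_{i=1}^n p_i = 1. For every j ∈ {1,…,n}, the stationary expected number of tasks at the j-th uplink server under π_m satisfies E_{π_m}[x^u_j] = (p_j/μ^u_j) · Z(m−1)/Z(m); consequently the update throughput λ = Σ_{j=1}^n μ^u_j · E_{π_m}[x^u_j] equals Z(m−1)/Z(m). -/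
open scoped BigOperators

open St

def incr {n : ℕ} (j : Fin n) (y : St n) : St n :=
  ⟨y.d, y.c, Function.update y.u j (y.u j + 1)⟩

lemma incr_inj {n : ℕ} (j : Fin n) : Function.Injective (incr (n := n) j) := by
  intro a b h
  cases a with | mk ad ac au =>
  cases b with | mk bd bc bu =>
  simp only [incr, St.mk.injEq] at h
  obtain ⟨hd, hc, hu⟩ := h
  simp only [St.mk.injEq]
  refine ⟨hd, hc, funext fun i => ?_⟩
  have := congrFun hu i
  by_cases hij : i = j
  · subst hij
    simpa using this
  · simpa [Function.update_of_ne hij] using this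

lemma total_incr {n : ℕ} (j : Fin n) (y : St n) : (incr j y).total = y.total + 1 := by
  unfold St.total incr
  simp only
  have h1 : ∀ (v : Fin n → ℕ), ∑ i, (y.d i + y.c i + v i) = (∑ i, (y.d i + y.c i)) + ∑ i, v i := by
    intro v; rw [← Finset.sum_add_distrib]
  rw [h1, h1, Finset.sum_update_of_mem (Finset.mem_univ j),
    ← Finset.add_sum_erase Finset.univ y.u (Finset.mem_univ j), ← Finset.erase_eq]
  omega

lemma w_incr {n : ℕ} (p μc μd μu : Fin n → ℝ) (j : Fin n) (y : St n) :
    w p μc μd μu (incr j y) = p j / μu j / ((y.u j : ℝ) + 1) * w p μc μd μu y := by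
  unfold St.w incr
  simp only
  set F : Fin n → ℝ := fun i =>
    (p i / μc i) ^ y.c i * ((p i / μd i) ^ y.d i / (Nat.factorial (y.d i) : ℝ)) *
      ((p i / μu i) ^ y.u i / (Nat.factorial (y.u i) : ℝ)) with hF
  have hGF : (fun i =>
      (p i / μc i) ^ y.c i * ((p i / μd i) ^ y.d i / (Nat.factorial (y.d i) : ℝ)) *
        ((p i / μu i) ^ Function.update y.u j (y.u j + 1) i /
          (Nat.factorial (Function.update y.u j (y.u j + 1) i) : ℝ)))
      = Function.update F j (p j / μu j / ((y.u j : ℝ) + 1) * F j) := by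
    funext i
    by_cases hij : i = j
    · subst hij
      simp only [Function.update_self, hF]
      have hfac : ((Nat.factorial (y.u i) : ℝ)) ≠ 0 := Nat.cast_ne_zero.2 (Nat.factorial_ne_zero _)
      have h1 : ((y.u i : ℝ) + 1) ≠ 0 := by positivity
      rw [pow_succ, Nat.factorial_succ]
      push_cast
      field_simp
    · simp [Function.update_of_ne hij, hF]
  rw [hGF, Finset.prod_update_of_mem (Finset.mem_univ j),
    ← Finset.mul_prod_erase Finset.univ F (Finset.mem_univ j), Finset.erase_eq]
  ring

lemma key {n : ℕ} (p μc μd μu : Fin n → ℝ) (j : Fin n) (m : ℤ) :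
    ∑' x : St n, (if (x.total : ℤ) = m then (x.u j : ℝ) * w p μc μd μu x else 0)
      = (p j / μu j) * Z p μc μd μu (m - 1) := by
  rw [← (incr_inj j).tsum_eq (f := fun x : St n =>
      if (x.total : ℤ) = m then (x.u j : ℝ) * w p μc μd μu x else 0) ?_]
  · rw [Z, ← tsum_mul_left]
    congr 1
    funext y
    have hu : (incr j y).u j = y.u j + 1 := Function.update_self _ _ _
    have hc : ((incr j y).total : ℤ) = m ↔ (y.total : ℤ) = m - 1 := by
      rw [total_incr]; push_cast; omega
    by_cases h : (y.total : ℤ) = m - 1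
    · rw [if_pos (hc.2 h), if_pos h, hu, w_incr]
      have h1 : ((y.u j : ℝ) + 1) ≠ 0 := by positivity
      push_cast
      rw [show ((y.u j : ℝ) + 1) * (p j / μu j / ((y.u j : ℝ) + 1) * w p μc μd μu y)
          = p j / μu j * w p μc μd μu y * (((y.u j : ℝ) + 1) / ((y.u j : ℝ) + 1)) by ring,
        div_self h1, mul_one]
    · rw [if_neg (fun hh => h (hc.1 hh)), if_neg h, mul_zero]
  · intro x hx
    simp only [Function.mem_support] at hx
    have hxu : x.u j ≠ 0 := by
      intro h0
      apply hx
      split <;> simp [h0]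
    refine ⟨⟨x.d, x.c, Function.update x.u j (x.u j - 1)⟩, ?_⟩
    simp only [incr, St.mk.injEq, true_and]
    rw [Function.update_self, Function.update_idem]
    have : x.u j - 1 + 1 = x.u j := by omega
    rw [this, Function.update_eq_self]

/-- Stationary expected uplink occupancy and update throughput:
`E_{π_m}[x^u_j] = (p_j/μ^u_j) · Z(m-1)/Z(m)` for every `j`, and consequently
`λ = Σ_j μ^u_j E_{π_m}[x^u_j] = Z(m-1)/Z(m)`. -/
theorem stmt9 (n m : ℕ) (hn : 1 ≤ n) (hm : 1 ≤ m)
    (p μc μd μu : Fin n → ℝ)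
    (hp : ∀ i, 0 < p i) (hpsum : ∑ i, p i = 1)
    (hμc : ∀ i, 0 < μc i) (hμd : ∀ i, 0 < μd i) (hμu : ∀ i, 0 < μu i) :
    (∀ j, Epi p μc μd μu (m : ℤ) (fun x => (x.u j : ℝ)) =
        (p j / μu j) * (Z p μc μd μu ((m : ℤ) - 1) / Z p μc μd μu (m : ℤ))) ∧
    (∑ j, μu j * Epi p μc μd μu (m : ℤ) (fun x => (x.u j : ℝ))) =
      Z p μc μd μu ((m : ℤ) - 1) / Z p μc μd μu (m : ℤ) := by
  have hE : ∀ j, Epi p μc μd μu (m : ℤ) (fun x => (x.u j : ℝ)) =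
      (p j / μu j) * (Z p μc μd μu ((m : ℤ) - 1) / Z p μc μd μu (m : ℤ)) := by
    intro j
    rw [Epi]
    have heq : ∀ x : St n,
        (if (x.total : ℤ) = (m : ℤ) then (x.u j : ℝ) * pd p μc μd μu (m : ℤ) x else 0)
        = (if (x.total : ℤ) = (m : ℤ) then (x.u j : ℝ) * w p μc μd μu x else 0)
            / Z p μc μd μu (m : ℤ) := by
      intro x
      rw [pd]
      split
      · rw [mul_div_assoc]
      · rw [zero_div]
    simp_rw [heq]
    rw [tsum_div_const, key, mul_div_assoc]
  refine ⟨hE, ?_⟩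
  have hstep : ∀ j : Fin n, μu j * Epi p μc μd μu (m : ℤ) (fun x => (x.u j : ℝ))
      = p j * (Z p μc μd μu ((m : ℤ) - 1) / Z p μc μd μu (m : ℤ)) := by
    intro j
    rw [hE j, ← mul_assoc, mul_div_assoc' (μu j), mul_comm (μu j) (p j),
      mul_div_assoc (p j), div_self (hμu j).ne', mul_one]
  rw [Finset.sum_congr rfl (fun j _ => hstep j), ← Finset.sum_mul, hpsum, one_mul]
end

section
/- Fix j ∈ {1,…,n} and an integer m ≥ 1, and regard the throughput λ = Z(m−1)/Z(m) as a function of the single variable p_j > 0 with all other parameters fixed. Then λ is differentiable in p_j and p_j · (d/dp_j) λ = λ · (E_{π_{m−1}}[S_j] − E_{π_m}[S_j]), where S_j(x) = x^d_j + x^c_j + x^u_j. -/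
open scoped BigOperators

open St

/-! Replacing `p_j` by `t` multiplies the weight of every state `x` by `(t / p_j) ^ S_j(x)`, so
each `Z(k)` is a polynomial in `t` whose logarithmic derivative at `t = p_j` is
`p_j Z(k)' = Z(k) E_{π_k}[S_j]`. The claim is the quotient rule for `λ = Z(m-1)/Z(m)`. -/

namespace St

variable {n : ℕ}

/-- The number `S_j(x)` of tasks at client `j`. -/
def load (j : Fin n) (x : St n) : ℕ := x.d j + x.c j + x.u j

theorem finite_setOf_total_cast_eq (k : ℤ) : {x : St n | (x.total : ℤ) = k}.Finite :=
  (finite_setOf_total_eq k.toNat).subset fun x (hx : (x.total : ℤ) = k) => by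
    simp only [Set.mem_ofPred_eq]
    omega

noncomputable def level (n : ℕ) (k : ℤ) : Finset (St n) := (finite_setOf_total_cast_eq k).toFinset

theorem mem_level {k : ℤ} {x : St n} : x ∈ level n k ↔ (x.total : ℤ) = k :=
  Set.Finite.mem_toFinset _

theorem tsum_ite_total_eq (k : ℤ) (g : St n → ℝ) :
    ∑' x : St n, (if (x.total : ℤ) = k then g x else 0) = ∑ x ∈ level n k, g x := by
  rw [tsum_eq_sum fun x hx => if_neg (mt mem_level.2 hx)]
  exact Finset.sum_congr rfl fun x hx => if_pos (mem_level.1 hx)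

variable (p μc μd μu : Fin n → ℝ)

theorem Z_eq_sum (k : ℤ) : Z p μc μd μu k = ∑ x ∈ level n k, w p μc μd μu x :=
  tsum_ite_total_eq k _

theorem Epi_eq_sum (k : ℤ) (f : St n → ℝ) :
    Epi p μc μd μu k f = ∑ x ∈ level n k, f x * w p μc μd μu x / Z p μc μd μu k := by
  simp only [Epi, tsum_ite_total_eq, pd, mul_div_assoc]

variable {p μc μd μu}

/-- When `Z(k) = 0` (e.g. `k < 0`) all weights on level `k` vanish, so both sides are `0` despite the
junk division inside `Epi`. -/
theorem Z_mul_Epi (hw : ∀ x, 0 ≤ w p μc μd μu x) (k : ℤ) (f : St n → ℝ) :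
    Z p μc μd μu k * Epi p μc μd μu k f = ∑ x ∈ level n k, f x * w p μc μd μu x := by
  rw [Epi_eq_sum, ← Finset.sum_div]
  by_cases hZ : Z p μc μd μu k = 0
  · have hw0 := (Finset.sum_eq_zero_iff_of_nonneg fun x _ => hw x).1 ((Z_eq_sum ..).symm.trans hZ)
    rw [hZ, zero_mul]
    exact (Finset.sum_eq_zero fun x hx => by rw [hw0 x hx, mul_zero]).symm
  · exact mul_div_cancel₀ _ hZ

theorem w_pos (hp : ∀ i, 0 < p i) (hμc : ∀ i, 0 < μc i) (hμd : ∀ i, 0 < μd i)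
    (hμu : ∀ i, 0 < μu i) (x : St n) : 0 < w p μc μd μu x :=
  Finset.prod_pos fun i _ => by
    have := hp i; have := hμc i; have := hμd i; have := hμu i
    positivity

theorem Z_pos (hw : ∀ x, 0 < w p μc μd μu x) (j : Fin n) (N : ℕ) : 0 < Z p μc μd μu N := by
  rw [Z_eq_sum]
  refine Finset.sum_pos (fun x _ => hw x) ⟨⟨0, Pi.single j N, 0⟩, mem_level.2 ?_⟩
  simp [total]

theorem w_update {j : Fin n} (hpj : p j ≠ 0) (t : ℝ) (x : St n) :
    w (Function.update p j t) μc μd μu x = w p μc μd μu x * (t / p j) ^ x.load j := by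
  have factor : ∀ i, (Function.update p j t i / μc i) ^ x.c i *
      ((Function.update p j t i / μd i) ^ x.d i / (x.d i).factorial) *
      ((Function.update p j t i / μu i) ^ x.u i / (x.u i).factorial) =
      (p i / μc i) ^ x.c i * ((p i / μd i) ^ x.d i / (x.d i).factorial) *
        ((p i / μu i) ^ x.u i / (x.u i).factorial) *
        if i = j then (t / p j) ^ x.load j else 1 := by
    intro i
    rcases eq_or_ne i j with rfl | hij
    · have hμ : ∀ a : ℝ, t / a = p i / a * (t / p i) := fun a => by field_simp
      rw [Function.update_self, hμ (μc i), hμ (μd i), hμ (μu i), if_pos rfl, load]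
      ring
    · simp [hij]
  simp only [w, factor, Finset.prod_mul_distrib, Finset.prod_ite_eq', Finset.mem_univ, if_true]

theorem hasDerivAt_Z_update (hw : ∀ x, 0 ≤ w p μc μd μu x) {j : Fin n} (hpj : p j ≠ 0)
    (k : ℤ) :
    HasDerivAt (fun t => Z (Function.update p j t) μc μd μu k)
      (Z p μc μd μu k * Epi p μc μd μu k (fun x => (x.load j : ℝ)) / p j) (p j) := by
  rw [Z_mul_Epi hw, Finset.sum_div]
  simp only [Z_eq_sum, w_update hpj]
  refine (HasDerivAt.fun_sum (u := level n k) fun x _ =>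
    (((hasDerivAt_id (p j)).div_const (p j)).pow (x.load j)).const_mul
      (w p μc μd μu x)).congr_deriv ?_
  refine Finset.sum_congr rfl fun x _ => ?_
  simp only [id, div_self hpj, one_pow]
  ring

end St

open St

theorem stmt10_general (n m : ℕ)
    (p μc μd μu : Fin n → ℝ)
    (hp : ∀ i, 0 < p i)
    (hμc : ∀ i, 0 < μc i) (hμd : ∀ i, 0 < μd i) (hμu : ∀ i, 0 < μu i)
    (j : Fin n) :
    DifferentiableAt ℝ
      (fun t => Z (Function.update p j t) μc μd μu ((m : ℤ) - 1) /
        Z (Function.update p j t) μc μd μu (m : ℤ)) (p j) ∧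
    p j * deriv (fun t => Z (Function.update p j t) μc μd μu ((m : ℤ) - 1) /
        Z (Function.update p j t) μc μd μu (m : ℤ)) (p j) =
      (Z p μc μd μu ((m : ℤ) - 1) / Z p μc μd μu (m : ℤ)) *
        (Epi p μc μd μu ((m : ℤ) - 1) (fun x => ((x.d j + x.c j + x.u j : ℕ) : ℝ)) -
          Epi p μc μd μu (m : ℤ) (fun x => ((x.d j + x.c j + x.u j : ℕ) : ℝ))) := by
  have hw : ∀ x, 0 < w p μc μd μu x := w_pos hp hμc hμd hμu
  have hpj : p j ≠ 0 := (hp j).ne'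
  have hZm : Z p μc μd μu m ≠ 0 := (Z_pos hw j m).ne'
  have hratio := (hasDerivAt_Z_update (fun x => (hw x).le) hpj (m - 1)).fun_div
    (hasDerivAt_Z_update (fun x => (hw x).le) hpj m) (by rwa [Function.update_eq_self])
  refine ⟨hratio.differentiableAt, ?_⟩
  rw [hratio.deriv, Function.update_eq_self]
  field_simp
  simp only [load]

/-- The throughput `λ = Z(m-1)/Z(m)`, seen as a function of `p_j`, is differentiable and
satisfies `p_j · (d/dp_j) λ = λ · (E_{π_{m-1}}[S_j] - E_{π_m}[S_j])`. -/
theorem stmt10 (n m : ℕ) (hn : 1 ≤ n) (hm : 1 ≤ m)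
    (p μc μd μu : Fin n → ℝ)
    (hp : ∀ i, 0 < p i)
    (hμc : ∀ i, 0 < μc i) (hμd : ∀ i, 0 < μd i) (hμu : ∀ i, 0 < μu i)
    (j : Fin n) :
    DifferentiableAt ℝ
      (fun t => Z (Function.update p j t) μc μd μu ((m : ℤ) - 1) /
        Z (Function.update p j t) μc μd μu (m : ℤ)) (p j) ∧
    p j * deriv (fun t => Z (Function.update p j t) μc μd μu ((m : ℤ) - 1) /
        Z (Function.update p j t) μc μd μu (m : ℤ)) (p j) =
      (Z p μc μd μu ((m : ℤ) - 1) / Z p μc μd μu (m : ℤ)) *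
        (Epi p μc μd μu ((m : ℤ) - 1) (fun x => ((x.d j + x.c j + x.u j : ℕ) : ℝ)) -
          Epi p μc μd μu (m : ℤ) (fun x => ((x.d j + x.c j + x.u j : ℕ) : ℝ))) :=
  stmt10_general n m p μc μd μu hp hμc hμd hμu j
end

section
/- Define the array V recursively by: V(r, 0) = 1 for r ∈ {1,…,3n+1}; V(1, j) = (1/μ^{CS})^j for j ∈ {0,…,m}; V(r+1, j) = V(r, j) + (p_r/μ^c_r) · V(r+1, j−1) for r ∈ {1,…,n} and j ∈ {1,…,m}; V(r+1, j) = Σ_{k=0}^{j} (1/k!) (p_{r−n}/μ^d_{r−n})^k · V(r, j−k) for r ∈ {n+1,…,2n} and j ∈ {1,…,m}; and V(r+1, j) = Σ_{k=0}^{j} (1/k!) (p_{r−2n}/μ^u_{r−2n})^k · V(r, j−k) for r ∈ {2n+1,…,3n} and j ∈ {1,…,m}. Then W(j) = V(3n+1, j) for every j ∈ {0, 1, …, m}. -/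
open scoped BigOperators

/-- An aggregated state of the network with a central-server queue: `cs` is the total
number of tasks at the central server, and `d`, `c`, `u` count the tasks at each
client's downlink, computation, and uplink servers. -/
structure StA (n : ℕ) where
  cs : ℕ
  d : Fin n → ℕ
  c : Fin n → ℕ
  u : Fin n → ℕ

namespace StA

variable {n : ℕ}

/-- Total number of tasks in an aggregated state. -/
def totalA (x : StA n) : ℕ := x.cs + ∑ i, (x.d i + x.c i + x.u i)

/-- Product-form weight of an aggregated state. -/
noncomputable def v (p μc μd μu : Fin n → ℝ) (μCS : ℝ) (x : StA n) : ℝ :=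
  (1 / μCS) ^ x.cs *
    ∏ i,
      (p i / μc i) ^ x.c i *
        ((p i / μd i) ^ x.d i / (Nat.factorial (x.d i) : ℝ)) *
        ((p i / μu i) ^ x.u i / (Nat.factorial (x.u i) : ℝ))

/-- Normalizing constant `W(k)` (it vanishes for `k < 0`). -/
noncomputable def W (p μc μd μu : Fin n → ℝ) (μCS : ℝ) (k : ℤ) : ℝ :=
  ∑' x : StA n, if (totalA x : ℤ) = k then v p μc μd μu μCS x else 0

/-- Aggregated product-form distribution `ν_k`. -/
noncomputable def nu (p μc μd μu : Fin n → ℝ) (μCS : ℝ) (k : ℤ) (x : StA n) : ℝ :=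
  v p μc μd μu μCS x / W p μc μd μu μCS k

end StA

open StA

section BuzenAux

open Finset

/-- Index type for the `3n+1` servers. -/
abbrev BIdx (n : ℕ) := Unit ⊕ Fin n ⊕ Fin n ⊕ Fin n

/-- Per-coordinate weight function. -/
noncomputable def aF {n : ℕ} (p μc μd μu : Fin n → ℝ) (μCS : ℝ) : BIdx n → ℕ → ℝ
  | .inl _, k => (1 / μCS) ^ k
  | .inr (.inl i), k => (p i / μc i) ^ k
  | .inr (.inr (.inl i)), k => (p i / μd i) ^ k / (Nat.factorial k : ℝ)
  | .inr (.inr (.inr i)), k => (p i / μu i) ^ k / (Nat.factorial k : ℝ)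

lemma aF_zero {n : ℕ} (p μc μd μu : Fin n → ℝ) (μCS : ℝ) (t : BIdx n) :
    aF p μc μd μu μCS t 0 = 1 := by
  rcases t with _ | (i | (i | i)) <;> simp [aF]

/-- Rank of a coordinate in the sweep order. -/
def rkB {n : ℕ} : BIdx n → ℕ
  | .inl _ => 0
  | .inr (.inl i) => 1 + i
  | .inr (.inr (.inl i)) => 1 + n + i
  | .inr (.inr (.inr i)) => 1 + 2 * n + i

lemma rkB_le {n : ℕ} (x : BIdx n) : rkB x ≤ 3 * n := by
  rcases x with _ | (i | (i | i))
  · exact Nat.zero_le _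
  · have := i.isLt; simp only [rkB]; omega
  · have := i.isLt; simp only [rkB]; omega
  · have := i.isLt; simp only [rkB]; omega

/-- The coordinate of a given rank. -/
def coB {n : ℕ} (hn : 0 < n) (t : ℕ) : BIdx n :=
  if t = 0 then .inl ()
  else if t ≤ n then .inr (.inl ⟨(t - 1) % n, Nat.mod_lt _ hn⟩)
  else if t ≤ 2 * n then .inr (.inr (.inl ⟨(t - 1 - n) % n, Nat.mod_lt _ hn⟩))
  else .inr (.inr (.inr ⟨(t - 1 - 2 * n) % n, Nat.mod_lt _ hn⟩))

lemma rkB_coB {n : ℕ} (hn : 0 < n) {t : ℕ} (ht : t ≤ 3 * n) : rkB (coB hn t) = t := by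
  unfold coB
  split_ifs with h0 h1 h2
  · simpa [rkB] using h0.symm
  · have h' : t - 1 < n := by omega
    simp only [rkB, Nat.mod_eq_of_lt h']
    omega
  · have h' : t - 1 - n < n := by omega
    simp only [rkB, Nat.mod_eq_of_lt h']
    omega
  · have h' : t - 1 - 2 * n < n := by omega
    simp only [rkB, Nat.mod_eq_of_lt h']
    omega

lemma coB_rkB {n : ℕ} (hn : 0 < n) (x : BIdx n) : coB hn (rkB x) = x := by
  rcases x with _ | (i | (i | i))
  · simp [rkB, coB]
  · have hlt := i.isLt
    show coB hn (1 + (i : ℕ)) = _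
    unfold coB
    rw [if_neg (by omega), if_pos (by omega)]
    congr 2
    refine Fin.ext ?_
    have h1 : 1 + (i : ℕ) - 1 = (i : ℕ) := by omega
    simp [h1, Nat.mod_eq_of_lt hlt]
  · have hlt := i.isLt
    show coB hn (1 + n + (i : ℕ)) = _
    unfold coB
    rw [if_neg (by omega), if_neg (by omega), if_pos (by omega)]
    congr 3
    refine Fin.ext ?_
    have h1 : 1 + n + (i : ℕ) - 1 - n = (i : ℕ) := by omega
    simp [h1, Nat.mod_eq_of_lt hlt]
  · have hlt := i.isLt
    show coB hn (1 + 2 * n + (i : ℕ)) = _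
    unfold coB
    rw [if_neg (by omega), if_neg (by omega), if_neg (by omega)]
    congr 3
    refine Fin.ext ?_
    have h1 : 1 + 2 * n + (i : ℕ) - 1 - 2 * n = (i : ℕ) := by omega
    simp [h1, Nat.mod_eq_of_lt hlt]

/-- The set of the first `r` coordinates. -/
def sCB {n : ℕ} (hn : 0 < n) (r : ℕ) : Finset (BIdx n) := (Finset.range r).image (coB hn)

lemma coB_notMem {n : ℕ} (hn : 0 < n) {r : ℕ} (hr : r ≤ 3 * n) : coB hn r ∉ sCB hn r := by
  intro h
  obtain ⟨t, ht, heq⟩ := Finset.mem_image.mp h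
  have ht' : t < r := Finset.mem_range.mp ht
  have := rkB_coB hn (le_trans (le_of_lt ht') hr)
  rw [heq, rkB_coB hn hr] at this
  omega

/-- Generic partial sum. -/
noncomputable def SSB {ι : Type*} [DecidableEq ι] (a : ι → ℕ → ℝ) (s : Finset ι) (j : ℕ) : ℝ :=
  ∑ f ∈ Finset.piAntidiag s j, ∏ t ∈ s, a t (f t)

lemma SSB_empty {ι : Type*} [DecidableEq ι] (a : ι → ℕ → ℝ) (j : ℕ) :
    SSB a (∅ : Finset ι) j = if j = 0 then 1 else 0 := by
  unfold SSB
  rw [Finset.piAntidiag_empty]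
  split_ifs <;> simp

lemma SSB_zero {ι : Type*} [DecidableEq ι] (a : ι → ℕ → ℝ) (ha : ∀ t, a t 0 = 1)
    (s : Finset ι) : SSB a s 0 = 1 := by
  unfold SSB
  rw [Finset.piAntidiag_zero]
  simp [ha]

lemma SSB_peel {ι : Type*} [DecidableEq ι] (a : ι → ℕ → ℝ) {i : ι} {s : Finset ι}
    (hi : i ∉ s) (j : ℕ) :
    SSB a (Finset.cons i s hi) j
      = ∑ k ∈ Finset.range (j + 1), a i k * SSB a s (j - k) := by
  unfold SSB
  rw [Finset.piAntidiag_cons, Finset.sum_disjiUnion,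
    Finset.Nat.sum_antidiagonal_eq_sum_range_succ_mk]
  refine Finset.sum_congr rfl fun k hk => ?_
  rw [Finset.sum_map, Finset.mul_sum]
  refine Finset.sum_congr rfl fun g hg => ?_
  have hgi : g i = 0 := by
    by_contra h
    exact hi ((Finset.mem_piAntidiag.mp hg).2 i h)
  rw [Finset.prod_cons]
  congr 1
  · simp [addRightEmbedding_apply, hgi]
  · refine Finset.prod_congr rfl fun t ht => ?_
    have htne : t ≠ i := fun h => hi (h ▸ ht)
    simp [addRightEmbedding_apply, htne]

lemma sCB_succ {n : ℕ} (hn : 0 < n) {r : ℕ} (hr : r ≤ 3 * n) :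
    sCB hn (r + 1) = Finset.cons (coB hn r) (sCB hn r) (coB_notMem hn hr) := by
  rw [Finset.cons_eq_insert]
  unfold sCB
  rw [Finset.range_add_one, Finset.image_insert]

lemma sCB_top {n : ℕ} (hn : 0 < n) : sCB hn (3 * n + 1) = Finset.univ := by
  apply Finset.eq_univ_iff_forall.mpr
  intro x
  refine Finset.mem_image.mpr ⟨rkB x, Finset.mem_range.mpr ?_, coB_rkB hn x⟩
  have := rkB_le x
  omega

/-- Encoding of a state as a function on coordinates. -/
def encB {n : ℕ} (x : StA n) : BIdx n → ℕ :=
  Sum.elim (fun _ => x.cs) (Sum.elim x.c (Sum.elim x.d x.u))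

def decB {n : ℕ} (f : BIdx n → ℕ) : StA n :=
  ⟨f (.inl ()), fun i => f (.inr (.inr (.inl i))), fun i => f (.inr (.inl i)),
    fun i => f (.inr (.inr (.inr i)))⟩

lemma encB_decB {n : ℕ} (f : BIdx n → ℕ) : encB (decB f) = f := by
  funext t
  rcases t with _ | (i | (i | i)) <;> rfl

lemma decB_encB {n : ℕ} (x : StA n) : decB (encB x) = x := rfl

instance {n : ℕ} : DecidableEq (StA n) := fun x y =>
  decidable_of_iff (encB x = encB y)
    ⟨fun h => by rw [← decB_encB x, h, decB_encB], fun h => h ▸ rfl⟩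

lemma sum_encB {n : ℕ} (x : StA n) : ∑ t, encB x t = x.totalA := by
  unfold StA.totalA encB
  rw [Fintype.sum_sum_type, Fintype.sum_sum_type, Fintype.sum_sum_type]
  simp [Finset.sum_add_distrib]
  ring

lemma v_encB {n : ℕ} (p μc μd μu : Fin n → ℝ) (μCS : ℝ) (x : StA n) :
    StA.v p μc μd μu μCS x = ∏ t, aF p μc μd μu μCS t (encB x t) := by
  unfold StA.v encB
  rw [Fintype.prod_sum_type, Fintype.prod_sum_type, Fintype.prod_sum_type]
  simp only [Sum.elim_inl, Sum.elim_inr, aF]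
  rw [Finset.prod_mul_distrib, Finset.prod_mul_distrib]
  rw [show (∏ _t : Unit, (1 / μCS) ^ x.cs) = (1 / μCS) ^ x.cs from by simp]
  ring

end BuzenAux


/-- Buzen's recursive algorithm with a central-server queue:
if `V` satisfies the recursion, then `W(j) = V(3n+1, j)` for every `j ∈ {0,…,m}`. -/
theorem stmt14 (n m : ℕ) (hn : 1 ≤ n) (hm : 1 ≤ m)
    (p μc μd μu : Fin n → ℝ) (μCS : ℝ)
    (hp : ∀ i, 0 < p i) (hpsum : ∑ i, p i = 1)
    (hμc : ∀ i, 0 < μc i) (hμd : ∀ i, 0 < μd i) (hμu : ∀ i, 0 < μu i) (hμCS : 0 < μCS)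
    (V : ℕ → ℕ → ℝ)
    (h0 : ∀ r, 1 ≤ r → r ≤ 3 * n + 1 → V r 0 = 1)
    (h1 : ∀ j ≤ m, V 1 j = (1 / μCS) ^ j)
    (hc : ∀ i : Fin n, ∀ j, 1 ≤ j → j ≤ m →
      V ((i : ℕ) + 2) j = V ((i : ℕ) + 1) j + (p i / μc i) * V ((i : ℕ) + 2) (j - 1))
    (hd : ∀ i : Fin n, ∀ j, 1 ≤ j → j ≤ m →
      V (n + (i : ℕ) + 2) j =
        ∑ k ∈ Finset.range (j + 1),
          (1 / (Nat.factorial k : ℝ)) * (p i / μd i) ^ k * V (n + (i : ℕ) + 1) (j - k))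
    (hu : ∀ i : Fin n, ∀ j, 1 ≤ j → j ≤ m →
      V (2 * n + (i : ℕ) + 2) j =
        ∑ k ∈ Finset.range (j + 1),
          (1 / (Nat.factorial k : ℝ)) * (p i / μu i) ^ k * V (2 * n + (i : ℕ) + 1) (j - k)) :
    ∀ j ≤ m, W p μc μd μu μCS (j : ℤ) = V (3 * n + 1) j := by
  have hn0 : 0 < n := hn
  set a := aF p μc μd μu μCS with ha
  have haz : ∀ t, a t 0 = 1 := aF_zero p μc μd μu μCS
  have peel' : ∀ r ≤ 3 * n, ∀ j : ℕ, SSB a (sCB hn0 (r + 1)) j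
      = ∑ k ∈ Finset.range (j + 1), a (coB hn0 r) k * SSB a (sCB hn0 r) (j - k) := by
    intro r hr j
    rw [sCB_succ hn0 hr]
    exact SSB_peel a _ j
  have key : ∀ r ≤ 3 * n, ∀ j ≤ m, V (r + 1) j = SSB a (sCB hn0 (r + 1)) j := by
    intro r
    induction r with
    | zero =>
      intro _ j hj
      rw [h1 j hj, peel' 0 (by omega) j]
      have hs0 : sCB hn0 0 = (∅ : Finset (BIdx n)) := by simp [sCB]
      rw [hs0]
      have hstep : ∀ k ∈ Finset.range (j + 1),
          a (coB hn0 0) k * SSB a (∅ : Finset (BIdx n)) (j - k)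
            = if k = j then a (coB hn0 0) j else 0 := by
        intro k hk
        have hk' : k ≤ j := by simpa [Nat.lt_succ_iff] using Finset.mem_range.mp hk
        rw [SSB_empty]
        by_cases h : k = j
        · subst h; simp
        · rw [if_neg (by omega), if_neg h, mul_zero]
      rw [Finset.sum_congr rfl hstep, Finset.sum_ite_eq' (Finset.range (j + 1))]
      rw [if_pos (Finset.self_mem_range_succ j)]
      have hco : coB hn0 0 = Sum.inl () := by simp [coB]
      rw [hco, ha]
      rfl
    | succ r ih =>
      intro hr1
      have hr : r ≤ 3 * n := by omega
      have ihr : ∀ j ≤ m, V (r + 1) j = SSB a (sCB hn0 (r + 1)) j := ih hr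
      by_cases hcse : r + 1 ≤ n
      · -- computation servers
        have hrn : r < n := by omega
        have hco : coB hn0 (r + 1) = Sum.inr (Sum.inl ⟨r, hrn⟩) := by
          unfold coB
          rw [if_neg (by omega), if_pos hcse]
          congr 2
          exact Fin.ext (by simp [Nat.mod_eq_of_lt hrn])
        set i : Fin n := ⟨r, hrn⟩ with hidef
        have hai : ∀ k : ℕ, a (coB hn0 (r + 1)) k = (p i / μc i) ^ k := by
          intro k; rw [hco, ha]; rfl
        have hSrec : ∀ j' : ℕ, SSB a (sCB hn0 (r + 2)) (j' + 1)
            = SSB a (sCB hn0 (r + 1)) (j' + 1)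
              + (p i / μc i) * SSB a (sCB hn0 (r + 2)) j' := by
          intro j'
          rw [show r + 2 = (r + 1) + 1 from rfl, peel' (r + 1) (by omega) (j' + 1),
            peel' (r + 1) (by omega) j', Finset.sum_range_succ']
          simp only [hai]
          have hsum : ∑ k ∈ Finset.range (j' + 1),
              (p i / μc i) ^ (k + 1) * SSB a (sCB hn0 (r + 1)) (j' + 1 - (k + 1))
              = (p i / μc i) * ∑ k ∈ Finset.range (j' + 1),
                  (p i / μc i) ^ k * SSB a (sCB hn0 (r + 1)) (j' - k) := by
            rw [Finset.mul_sum]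
            refine Finset.sum_congr rfl fun k hk => ?_
            have hsub : j' + 1 - (k + 1) = j' - k := by omega
            rw [hsub, pow_succ']
            ring
          rw [pow_zero, one_mul, Nat.sub_zero, hsum]
          ring
        intro j
        induction j with
        | zero =>
          intro _
          rw [h0 (r + 2) (by omega) (by omega), SSB_zero a haz]
        | succ j' ihj =>
          intro hj
          have hrec := hc i (j' + 1) (by omega) hj
          simp only [Nat.add_sub_cancel] at hrec
          calc V (r + 1 + 1) (j' + 1) = V ((i : ℕ) + 2) (j' + 1) := rfl
            _ = V ((i : ℕ) + 1) (j' + 1) + (p i / μc i) * V ((i : ℕ) + 2) j' := hrec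
            _ = SSB a (sCB hn0 (r + 1)) (j' + 1)
                + (p i / μc i) * SSB a (sCB hn0 (r + 2)) j' := by
                rw [show (i : ℕ) + 1 = r + 1 from rfl, show (i : ℕ) + 2 = r + 2 from rfl,
                  ihr (j' + 1) hj, ihj (by omega)]
            _ = SSB a (sCB hn0 (r + 1 + 1)) (j' + 1) := (hSrec j').symm
      · by_cases hcse2 : r + 1 ≤ 2 * n
        · -- downlink servers
          have hrn : r - n < n := by omega
          have hco : coB hn0 (r + 1) = Sum.inr (Sum.inr (Sum.inl ⟨r - n, hrn⟩)) := by
            unfold coB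
            rw [if_neg (by omega), if_neg (by omega), if_pos hcse2]
            congr 3
            refine Fin.ext ?_
            have h1' : r + 1 - 1 - n = r - n := by omega
            simp [h1', Nat.mod_eq_of_lt hrn]
          set i : Fin n := ⟨r - n, hrn⟩ with hidef
          intro j hj
          rcases Nat.eq_zero_or_pos j with rfl | hjpos
          · rw [h0 (r + 2) (by omega) (by omega), SSB_zero a haz]
          · have hrec := hd i j hjpos hj
            have hni : n + (i : ℕ) + 2 = r + 1 + 1 := by
              show n + (r - n) + 2 = r + 1 + 1; omega
            have hni1 : n + (i : ℕ) + 1 = r + 1 := by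
              show n + (r - n) + 1 = r + 1; omega
            rw [hni, hni1] at hrec
            rw [hrec, peel' (r + 1) (by omega) j]
            refine Finset.sum_congr rfl fun k hk => ?_
            rw [ihr (j - k) (by omega), hco, ha]
            show (1 / (Nat.factorial k : ℝ)) * (p i / μd i) ^ k * _
              = (p i / μd i) ^ k / (Nat.factorial k : ℝ) * _
            ring
        · -- uplink servers
          have hrn : r - 2 * n < n := by omega
          have hco : coB hn0 (r + 1) = Sum.inr (Sum.inr (Sum.inr ⟨r - 2 * n, hrn⟩)) := by
            unfold coB
            rw [if_neg (by omega), if_neg (by omega), if_neg (by omega)]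
            congr 3
            refine Fin.ext ?_
            have h1' : r + 1 - 1 - 2 * n = r - 2 * n := by omega
            simp [h1', Nat.mod_eq_of_lt hrn]
          set i : Fin n := ⟨r - 2 * n, hrn⟩ with hidef
          intro j hj
          rcases Nat.eq_zero_or_pos j with rfl | hjpos
          · rw [h0 (r + 2) (by omega) (by omega), SSB_zero a haz]
          · have hrec := hu i j hjpos hj
            have hni : 2 * n + (i : ℕ) + 2 = r + 1 + 1 := by
              show 2 * n + (r - 2 * n) + 2 = r + 1 + 1; omega
            have hni1 : 2 * n + (i : ℕ) + 1 = r + 1 := by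
              show 2 * n + (r - 2 * n) + 1 = r + 1; omega
            rw [hni, hni1] at hrec
            rw [hrec, peel' (r + 1) (by omega) j]
            refine Finset.sum_congr rfl fun k hk => ?_
            rw [ihr (j - k) (by omega), hco, ha]
            show (1 / (Nat.factorial k : ℝ)) * (p i / μu i) ^ k * _
              = (p i / μu i) ^ k / (Nat.factorial k : ℝ) * _
            ring
  have hW : ∀ j : ℕ, W p μc μd μu μCS (j : ℤ) = SSB a Finset.univ j := by
    intro j
    unfold StA.W
    rw [tsum_eq_sum (s := (Finset.piAntidiag (Finset.univ : Finset (BIdx n)) j).image decB)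
      (by
        intro x hx
        rw [if_neg]
        intro hcond
        apply hx
        refine Finset.mem_image.mpr ⟨encB x, ?_, decB_encB x⟩
        refine Finset.mem_piAntidiag.mpr ⟨?_, fun t _ => Finset.mem_univ t⟩
        have : x.totalA = j := by exact_mod_cast hcond
        rw [← this, ← sum_encB x])]
    rw [Finset.sum_image (by
      intro f hf g hg hfg
      rw [← encB_decB f, ← encB_decB g, hfg])]
    unfold SSB
    refine Finset.sum_congr rfl fun f hf => ?_
    have hsum : ∑ t, f t = j := (Finset.mem_piAntidiag.mp hf).1
    have htot : (decB f).totalA = j := by rw [← sum_encB, encB_decB]; exact hsum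
    rw [if_pos (by exact_mod_cast htot), v_encB, encB_decB, ha]
  intro j hj
  rw [hW j, ← sCB_top hn0]
  exact (key (3 * n) le_rfl j hj).symm
end

section
/- For every i ∈ {1,…,n}, the expected total number of class-i tasks under φ_{m−1} satisfies E_{φ_{m−1}}[x^{CS}_i + x^d_i + x^c_i + x^u_i] = p_i · β̃_{CS,1} + β̃_{i,1} + γ_i · W(m−2)/W(m−1), where β̃_{CS,1} = Σ_{k=1}^{m−1} (1/μ^{CS})^k · W(m−1−k)/W(m−1), β̃_{i,1} = Σ_{k=1}^{m−1} (p_i/μ^c_i)^k · W(m−1−k)/W(m−1), and γ_i = p_i (1/μ^d_i + 1/μ^u_i). -/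
open scoped BigOperators

open StA

/-- A multi-class state: `cs i` counts the class-`i` tasks at the central server, and
`d`, `c`, `u` count the tasks at each client's downlink, computation, and uplink servers. -/
structure StM (n : ℕ) where
  cs : Fin n → ℕ
  d : Fin n → ℕ
  c : Fin n → ℕ
  u : Fin n → ℕ

namespace StM

variable {n : ℕ}

/-- Total number of tasks in a multi-class state. -/
def totalM (x : StM n) : ℕ := ∑ i, (x.cs i + x.d i + x.c i + x.u i)

/-- Multi-class product-form distribution `φ_k`. -/
noncomputable def phi (p μc μd μu : Fin n → ℝ) (μCS : ℝ) (k : ℤ) (x : StM n) : ℝ :=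
  (1 / StA.W p μc μd μu μCS k) *
    ((Nat.factorial (∑ j, x.cs j) : ℝ) / ∏ j, (Nat.factorial (x.cs j) : ℝ)) *
    ∏ i,
      (p i / μCS) ^ x.cs i * (p i / μc i) ^ x.c i *
        ((p i / μd i) ^ x.d i / (Nat.factorial (x.d i) : ℝ)) *
        ((p i / μu i) ^ x.u i / (Nat.factorial (x.u i) : ℝ))

end StM

open StM

/-- Expectation of `f` under the multi-class distribution `φ_k`. -/
noncomputable def Ephi {n : ℕ} (p μc μd μu : Fin n → ℝ) (μCS : ℝ) (k : ℤ)
    (f : StM n → ℝ) : ℝ :=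
  ∑' x : StM n, if (totalM x : ℤ) = k then f x * phi p μc μd μu μCS k x else 0

namespace Stmt18

open Finset

variable {n : ℕ}

def eqA (n : ℕ) : StA n ≃ ℕ × (Fin n → ℕ) × (Fin n → ℕ) × (Fin n → ℕ) where
  toFun x := (x.cs, x.d, x.c, x.u)
  invFun q := ⟨q.1, q.2.1, q.2.2.1, q.2.2.2⟩
  left_inv _ := rfl
  right_inv _ := rfl

def eqM (n : ℕ) : StM n ≃ (Fin n → ℕ) × (Fin n → ℕ) × (Fin n → ℕ) × (Fin n → ℕ) where
  toFun x := (x.cs, x.d, x.c, x.u)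
  invFun q := ⟨q.1, q.2.1, q.2.2.1, q.2.2.2⟩
  left_inv _ := rfl
  right_inv _ := rfl

instance : DecidableEq (StA n) := (eqA n).decidableEq
instance : DecidableEq (StM n) := (eqM n).decidableEq

def boxF (n k : ℕ) : Finset (Fin n → ℕ) := Finset.Icc 0 (fun _ => k)

lemma mem_boxF {k : ℕ} {f : Fin n → ℕ} (h : ∀ i, f i ≤ k) : f ∈ boxF n k := by
  simp only [boxF, Finset.mem_Icc]
  exact ⟨fun i => Nat.zero_le _, fun i => h i⟩

def FA (n k : ℕ) : Finset (StA n) :=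
  ((Finset.range (k+1)) ×ˢ boxF n k ×ˢ boxF n k ×ˢ boxF n k).map (eqA n).symm.toEmbedding

def FM (n k : ℕ) : Finset (StM n) :=
  (boxF n k ×ˢ boxF n k ×ˢ boxF n k ×ˢ boxF n k).map (eqM n).symm.toEmbedding

lemma mem_FA {k : ℕ} {x : StA n} (h : totalA x = k) : x ∈ FA n k := by
  have hb : ∀ i, x.d i + x.c i + x.u i ≤ ∑ j, (x.d j + x.c j + x.u j) :=
    fun i => Finset.single_le_sum (f := fun j => x.d j + x.c j + x.u j)
      (fun j _ => Nat.zero_le _) (Finset.mem_univ i)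
  rw [totalA] at h
  rw [FA, Finset.mem_map_equiv]
  simp only [Equiv.symm_symm, eqA, Equiv.coe_fn_mk, Finset.mem_product, Finset.mem_range]
  refine ⟨by omega, mem_boxF fun i => by have := hb i; omega,
    mem_boxF fun i => by have := hb i; omega, mem_boxF fun i => by have := hb i; omega⟩

lemma mem_FM {k : ℕ} {x : StM n} (h : totalM x = k) : x ∈ FM n k := by
  have hb : ∀ i, x.cs i + x.d i + x.c i + x.u i ≤ ∑ j, (x.cs j + x.d j + x.c j + x.u j) :=
    fun i => Finset.single_le_sum (f := fun j => x.cs j + x.d j + x.c j + x.u j)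
      (fun j _ => Nat.zero_le _) (Finset.mem_univ i)
  rw [totalM] at h
  rw [FM, Finset.mem_map_equiv]
  simp only [Equiv.symm_symm, eqM, Equiv.coe_fn_mk, Finset.mem_product]
  exact ⟨mem_boxF fun i => by have := hb i; omega, mem_boxF fun i => by have := hb i; omega,
    mem_boxF fun i => by have := hb i; omega, mem_boxF fun i => by have := hb i; omega⟩

lemma tsumA_eq (f : StA n → ℝ) (k : ℕ) :
    (∑' x : StA n, if (totalA x : ℤ) = (k : ℤ) then f x else 0)
      = ∑ x ∈ (FA n k).filter (fun x => totalA x = k), f x := by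
  rw [tsum_eq_sum (s := FA n k) (f := fun x => if (totalA x : ℤ) = (k : ℤ) then f x else 0)
    (by
      intro x hx
      by_cases h : (totalA x : ℤ) = (k : ℤ)
      · exact absurd (mem_FA (by exact_mod_cast h)) hx
      · simp [h])]
  rw [Finset.sum_filter]
  exact Finset.sum_congr rfl fun x _ => by norm_cast

lemma tsumM_eq (f : StM n → ℝ) (k : ℕ) :
    (∑' x : StM n, if (totalM x : ℤ) = (k : ℤ) then f x else 0)
      = ∑ x ∈ (FM n k).filter (fun x => totalM x = k), f x := by
  rw [tsum_eq_sum (s := FM n k) (f := fun x => if (totalM x : ℤ) = (k : ℤ) then f x else 0)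
    (by
      intro x hx
      by_cases h : (totalM x : ℤ) = (k : ℤ)
      · exact absurd (mem_FM (by exact_mod_cast h)) hx
      · simp [h])]
  rw [Finset.sum_filter]
  exact Finset.sum_congr rfl fun x _ => by norm_cast

variable (p μc μd μu : Fin n → ℝ) (μCS : ℝ)

lemma W_nat (k : ℕ) :
    W p μc μd μu μCS (k : ℤ)
      = ∑ x ∈ (FA n k).filter (fun x => totalA x = k), v p μc μd μu μCS x :=
  tsumA_eq _ k

lemma W_neg {k : ℤ} (hk : k < 0) : W p μc μd μu μCS k = 0 := by
  rw [W]
  convert tsum_zero with x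
  rw [if_neg]
  intro h
  omega


def SetA (n t : ℕ) : Finset (StA n) := (FA n t).filter (fun x => totalA x = t)
def SetM (n t : ℕ) : Finset (StM n) := (FM n t).filter (fun x => totalM x = t)

lemma W_natS (k : ℕ) :
    W p μc μd μu μCS (k : ℤ) = ∑ x ∈ SetA n k, v p μc μd μu μCS x :=
  W_nat p μc μd μu μCS k

lemma prod_comp_update (G : Fin n → ℕ → ℝ) (f : Fin n → ℕ) (i : Fin n) (b : ℕ) :
    ∏ j, G j (Function.update f i b j) = G i b * ∏ j ∈ Finset.univ.erase i, G j (f j) := by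
  rw [← Finset.mul_prod_erase Finset.univ (fun j => G j (Function.update f i b j))
    (Finset.mem_univ i), Function.update_self]
  exact congrArg _ (Finset.prod_congr rfl fun j hj => by
    rw [Function.update_of_ne (Finset.mem_erase.mp hj).1])

lemma prod_split (G : Fin n → ℕ → ℝ) (f : Fin n → ℕ) (i : Fin n) :
    ∏ j, G j (f j) = G i (f i) * ∏ j ∈ Finset.univ.erase i, G j (f j) :=
  (Finset.mul_prod_erase _ _ (Finset.mem_univ i)).symm

lemma sum_comp_update (G : Fin n → ℕ → ℕ) (f : Fin n → ℕ) (i : Fin n) (b : ℕ) :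
    ∑ j, G j (Function.update f i b j) = G i b + ∑ j ∈ Finset.univ.erase i, G j (f j) := by
  rw [← Finset.add_sum_erase Finset.univ (fun j => G j (Function.update f i b j))
    (Finset.mem_univ i), Function.update_self]
  exact congrArg _ (Finset.sum_congr rfl fun j hj => by
    rw [Function.update_of_ne (Finset.mem_erase.mp hj).1])

lemma sum_split (G : Fin n → ℕ → ℕ) (f : Fin n → ℕ) (i : Fin n) :
    ∑ j, G j (f j) = G i (f i) + ∑ j ∈ Finset.univ.erase i, G j (f j) :=
  (Finset.add_sum_erase _ _ (Finset.mem_univ i)).symm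

lemma fac_step (b : ℝ) (r : ℕ) :
    ((r:ℝ)+1) * (b^(r+1) / (Nat.factorial (r+1) : ℝ)) = b * (b^r / (Nat.factorial r : ℝ)) := by
  have h2 : ((Nat.factorial r : ℕ):ℝ) ≠ 0 := Nat.cast_ne_zero.mpr (Nat.factorial_ne_zero _)
  have h3 : ((r:ℝ)+1) ≠ 0 := by positivity
  rw [Nat.factorial_succ, pow_succ]
  push_cast
  field_simp

variable {p μc μd μu μCS} in
lemma v_cs_add (x : StA n) (k : ℕ) :
    v p μc μd μu μCS ⟨x.cs + k, x.d, x.c, x.u⟩ = (1/μCS)^k * v p μc μd μu μCS x := by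
  simp only [v]
  rw [pow_add]
  ring

lemma v_c_update (i : Fin n) (x : StA n) (k : ℕ) :
    v p μc μd μu μCS ⟨x.cs, x.d, Function.update x.c i (x.c i + k), x.u⟩
      = (p i / μc i)^k * v p μc μd μu μCS x := by
  simp only [v]
  rw [prod_comp_update (G := fun j m => (p j / μc j)^m *
      ((p j / μd j)^(x.d j) / (Nat.factorial (x.d j) : ℝ)) *
      ((p j / μu j)^(x.u j) / (Nat.factorial (x.u j) : ℝ))) x.c i (x.c i + k),
    prod_split (G := fun j m => (p j / μc j)^m *
      ((p j / μd j)^(x.d j) / (Nat.factorial (x.d j) : ℝ)) *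
      ((p j / μu j)^(x.u j) / (Nat.factorial (x.u j) : ℝ))) x.c i]
  rw [pow_add]
  ring

lemma v_d_succ (i : Fin n) (x : StA n) :
    ((x.d i : ℝ) + 1) * v p μc μd μu μCS ⟨x.cs, Function.update x.d i (x.d i + 1), x.c, x.u⟩
      = (p i / μd i) * v p μc μd μu μCS x := by
  simp only [v]
  rw [prod_comp_update (G := fun j m => (p j / μc j)^(x.c j) *
      ((p j / μd j)^m / (Nat.factorial m : ℝ)) *
      ((p j / μu j)^(x.u j) / (Nat.factorial (x.u j) : ℝ))) x.d i (x.d i + 1),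
    prod_split (G := fun j m => (p j / μc j)^(x.c j) *
      ((p j / μd j)^m / (Nat.factorial m : ℝ)) *
      ((p j / μu j)^(x.u j) / (Nat.factorial (x.u j) : ℝ))) x.d i]
  linear_combination ((1/μCS)^x.cs * (p i / μc i)^(x.c i) *
      ((p i / μu i)^(x.u i) / (Nat.factorial (x.u i) : ℝ)) *
      (∏ j ∈ Finset.univ.erase i, (p j / μc j)^(x.c j) *
        ((p j / μd j)^(x.d j) / (Nat.factorial (x.d j) : ℝ)) *
        ((p j / μu j)^(x.u j) / (Nat.factorial (x.u j) : ℝ)))) *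
    fac_step (p i / μd i) (x.d i)

lemma v_u_succ (i : Fin n) (x : StA n) :
    ((x.u i : ℝ) + 1) * v p μc μd μu μCS ⟨x.cs, x.d, x.c, Function.update x.u i (x.u i + 1)⟩
      = (p i / μu i) * v p μc μd μu μCS x := by
  simp only [v]
  rw [prod_comp_update (G := fun j m => (p j / μc j)^(x.c j) *
      ((p j / μd j)^(x.d j) / (Nat.factorial (x.d j) : ℝ)) *
      ((p j / μu j)^m / (Nat.factorial m : ℝ))) x.u i (x.u i + 1),
    prod_split (G := fun j m => (p j / μc j)^(x.c j) *
      ((p j / μd j)^(x.d j) / (Nat.factorial (x.d j) : ℝ)) *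
      ((p j / μu j)^m / (Nat.factorial m : ℝ))) x.u i]
  linear_combination ((1/μCS)^x.cs * (p i / μc i)^(x.c i) *
      ((p i / μd i)^(x.d i) / (Nat.factorial (x.d i) : ℝ)) *
      (∏ j ∈ Finset.univ.erase i, (p j / μc j)^(x.c j) *
        ((p j / μd j)^(x.d j) / (Nat.factorial (x.d j) : ℝ)) *
        ((p j / μu j)^(x.u j) / (Nat.factorial (x.u j) : ℝ)))) *
    fac_step (p i / μu i) (x.u i)


lemma totalA_c_update (x : StA n) (i : Fin n) (b : ℕ) :
    totalA ⟨x.cs, x.d, Function.update x.c i b, x.u⟩ + x.c i = totalA x + b := by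
  simp only [totalA]
  rw [sum_comp_update (G := fun j m => x.d j + m + x.u j) x.c i b,
      sum_split (G := fun j m => x.d j + m + x.u j) x.c i]
  omega

lemma totalA_d_update (x : StA n) (i : Fin n) (b : ℕ) :
    totalA ⟨x.cs, Function.update x.d i b, x.c, x.u⟩ + x.d i = totalA x + b := by
  simp only [totalA]
  rw [sum_comp_update (G := fun j m => m + x.c j + x.u j) x.d i b,
      sum_split (G := fun j m => m + x.c j + x.u j) x.d i]
  omega

lemma totalA_u_update (x : StA n) (i : Fin n) (b : ℕ) :
    totalA ⟨x.cs, x.d, x.c, Function.update x.u i b⟩ + x.u i = totalA x + b := by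
  simp only [totalA]
  rw [sum_comp_update (G := fun j m => x.d j + x.c j + m) x.u i b,
      sum_split (G := fun j m => x.d j + x.c j + m) x.u i]
  omega

lemma shiftCS (t k : ℕ) (hk : k ≤ t) :
    ∑ x ∈ (FA n t).filter (fun x => totalA x = t ∧ k ≤ x.cs), v p μc μd μu μCS x
      = (1/μCS)^k * ∑ x ∈ SetA n (t - k), v p μc μd μu μCS x := by
  rw [Finset.mul_sum]
  refine Finset.sum_nbij' (i := fun x => (⟨x.cs - k, x.d, x.c, x.u⟩ : StA n))
    (j := fun y => (⟨y.cs + k, y.d, y.c, y.u⟩ : StA n)) ?_ ?_ ?_ ?_ ?_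
  · intro x hx
    rw [Finset.mem_filter] at hx
    obtain ⟨-, hxt, hxk⟩ := hx
    have h2 : totalA (⟨x.cs - k, x.d, x.c, x.u⟩ : StA n) = t - k := by
      simp only [totalA] at hxt ⊢; omega
    exact Finset.mem_filter.mpr ⟨mem_FA h2, h2⟩
  · intro y hy
    rw [SetA, Finset.mem_filter] at hy
    have h2 : totalA (⟨y.cs + k, y.d, y.c, y.u⟩ : StA n) = t := by
      have := hy.2
      simp only [totalA] at this ⊢; omega
    exact Finset.mem_filter.mpr ⟨mem_FA h2, h2, Nat.le_add_left k y.cs⟩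
  · intro x hx
    rw [Finset.mem_filter] at hx
    obtain ⟨-, -, hxk⟩ := hx
    cases x
    simp only [StA.mk.injEq] at *
    refine ⟨by omega, trivial, trivial, trivial⟩
  · intro y _
    cases y
    simp only [StA.mk.injEq]
    exact ⟨by omega, trivial, trivial, trivial⟩
  · intro x hx
    rw [Finset.mem_filter] at hx
    obtain ⟨-, -, hxk⟩ := hx
    rw [← v_cs_add (⟨x.cs - k, x.d, x.c, x.u⟩ : StA n) k]
    congr 1
    cases x
    simp only [StA.mk.injEq] at *
    refine ⟨by omega, trivial, trivial, trivial⟩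

lemma shiftC (i : Fin n) (t k : ℕ) (hk : k ≤ t) :
    ∑ x ∈ (FA n t).filter (fun x => totalA x = t ∧ k ≤ x.c i), v p μc μd μu μCS x
      = (p i / μc i)^k * ∑ x ∈ SetA n (t - k), v p μc μd μu μCS x := by
  rw [Finset.mul_sum]
  refine Finset.sum_nbij'
    (i := fun x => (⟨x.cs, x.d, Function.update x.c i (x.c i - k), x.u⟩ : StA n))
    (j := fun y => (⟨y.cs, y.d, Function.update y.c i (y.c i + k), y.u⟩ : StA n)) ?_ ?_ ?_ ?_ ?_
  · intro x hx
    rw [Finset.mem_filter] at hx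
    obtain ⟨-, hxt, hxk⟩ := hx
    have h2 : totalA (⟨x.cs, x.d, Function.update x.c i (x.c i - k), x.u⟩ : StA n) = t - k := by
      have := totalA_c_update x i (x.c i - k)
      omega
    exact Finset.mem_filter.mpr ⟨mem_FA h2, h2⟩
  · intro y hy
    rw [SetA, Finset.mem_filter] at hy
    have h2 : totalA (⟨y.cs, y.d, Function.update y.c i (y.c i + k), y.u⟩ : StA n) = t := by
      have := totalA_c_update y i (y.c i + k)
      have := hy.2
      omega
    refine Finset.mem_filter.mpr ⟨mem_FA h2, h2, ?_⟩
    show k ≤ Function.update y.c i (y.c i + k) i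
    rw [Function.update_self]
    omega
  · intro x hx
    rw [Finset.mem_filter] at hx
    obtain ⟨-, -, hxk⟩ := hx
    cases x
    simp only [StA.mk.injEq] at *
    refine ⟨trivial, trivial, ?_, trivial⟩
    rw [Function.update_self, Function.update_idem]
    have : _ - k + k = _ := Nat.sub_add_cancel hxk
    rw [this, Function.update_eq_self]
  · intro y _
    cases y
    simp only [StA.mk.injEq]
    refine ⟨trivial, trivial, ?_, trivial⟩
    rw [Function.update_self, Function.update_idem, Nat.add_sub_cancel, Function.update_eq_self]
  · intro x hx
    rw [Finset.mem_filter] at hx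
    obtain ⟨-, -, hxk⟩ := hx
    rw [← v_c_update p μc μd μu μCS i (⟨x.cs, x.d, Function.update x.c i (x.c i - k), x.u⟩ : StA n) k]
    congr 1
    cases x
    simp only [StA.mk.injEq] at *
    refine ⟨trivial, trivial, ?_, trivial⟩
    rw [Function.update_self, Function.update_idem]
    have : _ - k + k = _ := Nat.sub_add_cancel hxk
    rw [this, Function.update_eq_self]

lemma cs_count (t : ℕ) (x : StA n) (hx : x ∈ SetA n t) (w : ℝ) :
    (x.cs : ℝ) * w = ∑ k ∈ Finset.Icc 1 t, if k ≤ x.cs then w else 0 := by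
  rw [← Finset.sum_filter]
  have hxt := (Finset.mem_filter.mp hx).2
  have hcs : x.cs ≤ t := by simp only [totalA] at hxt; omega
  have hset : (Finset.Icc 1 t).filter (fun k => k ≤ x.cs) = Finset.Icc 1 x.cs := by
    ext k
    simp only [Finset.mem_filter, Finset.mem_Icc]
    omega
  rw [hset, Finset.sum_const, Nat.card_Icc, nsmul_eq_mul, Nat.add_sub_cancel]

lemma c_count (i : Fin n) (t : ℕ) (x : StA n) (hx : x ∈ SetA n t) (w : ℝ) :
    (x.c i : ℝ) * w = ∑ k ∈ Finset.Icc 1 t, if k ≤ x.c i then w else 0 := by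
  rw [← Finset.sum_filter]
  have hxt := (Finset.mem_filter.mp hx).2
  have hb : x.d i + x.c i + x.u i ≤ ∑ j, (x.d j + x.c j + x.u j) :=
    Finset.single_le_sum (f := fun j => x.d j + x.c j + x.u j)
      (fun j _ => Nat.zero_le _) (Finset.mem_univ i)
  have hcs : x.c i ≤ t := by simp only [totalA] at hxt; omega
  have hset : (Finset.Icc 1 t).filter (fun k => k ≤ x.c i) = Finset.Icc 1 (x.c i) := by
    ext k
    simp only [Finset.mem_filter, Finset.mem_Icc]
    omega
  rw [hset, Finset.sum_const, Nat.card_Icc, nsmul_eq_mul, Nat.add_sub_cancel]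

lemma geomCS (t : ℕ) :
    ∑ x ∈ SetA n t, (x.cs : ℝ) * v p μc μd μu μCS x
      = ∑ k ∈ Finset.Icc 1 t, (1/μCS)^k * ∑ x ∈ SetA n (t - k), v p μc μd μu μCS x := by
  rw [Finset.sum_congr rfl (fun x hx => cs_count t x hx (v p μc μd μu μCS x)), Finset.sum_comm]
  refine Finset.sum_congr rfl fun k hk => ?_
  rw [← Finset.sum_filter, SetA, Finset.filter_filter]
  exact shiftCS p μc μd μu μCS t k (Finset.mem_Icc.mp hk).2

lemma geomC (i : Fin n) (t : ℕ) :
    ∑ x ∈ SetA n t, (x.c i : ℝ) * v p μc μd μu μCS x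
      = ∑ k ∈ Finset.Icc 1 t, (p i / μc i)^k * ∑ x ∈ SetA n (t - k), v p μc μd μu μCS x := by
  rw [Finset.sum_congr rfl (fun x hx => c_count i t x hx (v p μc μd μu μCS x)), Finset.sum_comm]
  refine Finset.sum_congr rfl fun k hk => ?_
  rw [← Finset.sum_filter, SetA, Finset.filter_filter]
  exact shiftC p μc μd μu μCS i t k (Finset.mem_Icc.mp hk).2


lemma poisD (i : Fin n) (t : ℕ) :
    ∑ x ∈ SetA n t, (x.d i : ℝ) * v p μc μd μu μCS x
      = (p i / μd i) * W p μc μd μu μCS ((t:ℤ) - 1) := by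
  cases t with
  | zero =>
      rw [W_neg p μc μd μu μCS (by norm_num), mul_zero]
      refine Finset.sum_eq_zero fun x hx => ?_
      have hxt := (Finset.mem_filter.mp hx).2
      have hb : x.d i + x.c i + x.u i ≤ ∑ j, (x.d j + x.c j + x.u j) :=
        Finset.single_le_sum (f := fun j => x.d j + x.c j + x.u j)
          (fun j _ => Nat.zero_le _) (Finset.mem_univ i)
      have hdi : x.d i = 0 := by simp only [totalA] at hxt; omega
      rw [hdi]
      simp
  | succ s =>
      have hc : ((s+1 : ℕ):ℤ) - 1 = (s : ℤ) := by push_cast; ring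
      rw [hc, W_natS, Finset.mul_sum]
      rw [← Finset.sum_filter_of_ne (p := fun x => 1 ≤ x.d i)
        (by
          intro x _ hne
          by_contra hlt
          have : x.d i = 0 := by omega
          rw [this] at hne
          simp at hne)]
      refine Finset.sum_nbij'
        (i := fun x => (⟨x.cs, Function.update x.d i (x.d i - 1), x.c, x.u⟩ : StA n))
        (j := fun y => (⟨y.cs, Function.update y.d i (y.d i + 1), y.c, y.u⟩ : StA n)) ?_ ?_ ?_ ?_ ?_
      · intro x hx
        rw [Finset.mem_filter, SetA, Finset.mem_filter] at hx
        obtain ⟨⟨-, hxt⟩, hxk⟩ := hx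
        have h2 : totalA (⟨x.cs, Function.update x.d i (x.d i - 1), x.c, x.u⟩ : StA n) = s := by
          have := totalA_d_update x i (x.d i - 1)
          omega
        exact Finset.mem_filter.mpr ⟨mem_FA h2, h2⟩
      · intro y hy
        rw [SetA, Finset.mem_filter] at hy
        have h2 : totalA (⟨y.cs, Function.update y.d i (y.d i + 1), y.c, y.u⟩ : StA n) = s + 1 := by
          have := totalA_d_update y i (y.d i + 1)
          have := hy.2
          omega
        refine Finset.mem_filter.mpr ⟨Finset.mem_filter.mpr ⟨mem_FA h2, h2⟩, ?_⟩
        show 1 ≤ Function.update y.d i (y.d i + 1) i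
        rw [Function.update_self]
        omega
      · intro x hx
        rw [Finset.mem_filter] at hx
        obtain ⟨-, hxk⟩ := hx
        cases x
        simp only [StA.mk.injEq] at *
        refine ⟨trivial, ?_, trivial, trivial⟩
        rw [Function.update_self, Function.update_idem]
        have : _ - 1 + 1 = _ := Nat.sub_add_cancel hxk
        rw [this, Function.update_eq_self]
      · intro y _
        cases y
        simp only [StA.mk.injEq]
        refine ⟨trivial, ?_, trivial, trivial⟩
        rw [Function.update_self, Function.update_idem, Nat.add_sub_cancel,
          Function.update_eq_self]
      · intro x hx
        rw [Finset.mem_filter] at hx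
        obtain ⟨-, hxk⟩ := hx
        obtain ⟨cs, d, c, u⟩ := x
        dsimp only at hxk ⊢
        have h := v_d_succ p μc μd μu μCS i
          (⟨cs, Function.update d i (d i - 1), c, u⟩ : StA n)
        dsimp only at h
        rw [Function.update_self, Function.update_idem, Nat.sub_add_cancel hxk,
          Function.update_eq_self] at h
        have hco : ((d i - 1 : ℕ) : ℝ) + 1 = (d i : ℝ) := by
          rw [Nat.cast_sub hxk]; push_cast; ring
        rw [← hco]
        exact h

lemma poisU (i : Fin n) (t : ℕ) :
    ∑ x ∈ SetA n t, (x.u i : ℝ) * v p μc μd μu μCS x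
      = (p i / μu i) * W p μc μd μu μCS ((t:ℤ) - 1) := by
  cases t with
  | zero =>
      rw [W_neg p μc μd μu μCS (by norm_num), mul_zero]
      refine Finset.sum_eq_zero fun x hx => ?_
      have hxt := (Finset.mem_filter.mp hx).2
      have hb : x.d i + x.c i + x.u i ≤ ∑ j, (x.d j + x.c j + x.u j) :=
        Finset.single_le_sum (f := fun j => x.d j + x.c j + x.u j)
          (fun j _ => Nat.zero_le _) (Finset.mem_univ i)
      have hui : x.u i = 0 := by simp only [totalA] at hxt; omega
      rw [hui]
      simp
  | succ s =>
      have hc : ((s+1 : ℕ):ℤ) - 1 = (s : ℤ) := by push_cast; ring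
      rw [hc, W_natS, Finset.mul_sum]
      rw [← Finset.sum_filter_of_ne (p := fun x => 1 ≤ x.u i)
        (by
          intro x _ hne
          by_contra hlt
          have : x.u i = 0 := by omega
          rw [this] at hne
          simp at hne)]
      refine Finset.sum_nbij'
        (i := fun x => (⟨x.cs, x.d, x.c, Function.update x.u i (x.u i - 1)⟩ : StA n))
        (j := fun y => (⟨y.cs, y.d, y.c, Function.update y.u i (y.u i + 1)⟩ : StA n)) ?_ ?_ ?_ ?_ ?_
      · intro x hx
        rw [Finset.mem_filter, SetA, Finset.mem_filter] at hx
        obtain ⟨⟨-, hxt⟩, hxk⟩ := hx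
        have h2 : totalA (⟨x.cs, x.d, x.c, Function.update x.u i (x.u i - 1)⟩ : StA n) = s := by
          have := totalA_u_update x i (x.u i - 1)
          omega
        exact Finset.mem_filter.mpr ⟨mem_FA h2, h2⟩
      · intro y hy
        rw [SetA, Finset.mem_filter] at hy
        have h2 : totalA (⟨y.cs, y.d, y.c, Function.update y.u i (y.u i + 1)⟩ : StA n) = s + 1 := by
          have := totalA_u_update y i (y.u i + 1)
          have := hy.2
          omega
        refine Finset.mem_filter.mpr ⟨Finset.mem_filter.mpr ⟨mem_FA h2, h2⟩, ?_⟩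
        show 1 ≤ Function.update y.u i (y.u i + 1) i
        rw [Function.update_self]
        omega
      · intro x hx
        rw [Finset.mem_filter] at hx
        obtain ⟨-, hxk⟩ := hx
        cases x
        simp only [StA.mk.injEq] at *
        refine ⟨trivial, trivial, trivial, ?_⟩
        rw [Function.update_self, Function.update_idem]
        have : _ - 1 + 1 = _ := Nat.sub_add_cancel hxk
        rw [this, Function.update_eq_self]
      · intro y _
        cases y
        simp only [StA.mk.injEq]
        refine ⟨trivial, trivial, trivial, ?_⟩
        rw [Function.update_self, Function.update_idem, Nat.add_sub_cancel,
          Function.update_eq_self]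
      · intro x hx
        rw [Finset.mem_filter] at hx
        obtain ⟨-, hxk⟩ := hx
        obtain ⟨cs, d, c, u⟩ := x
        dsimp only at hxk ⊢
        have h := v_u_succ p μc μd μu μCS i
          (⟨cs, d, c, Function.update u i (u i - 1)⟩ : StA n)
        dsimp only at h
        rw [Function.update_self, Function.update_idem, Nat.sub_add_cancel hxk,
          Function.update_eq_self] at h
        have hco : ((u i - 1 : ℕ) : ℝ) + 1 = (u i : ℝ) := by
          rw [Nat.cast_sub hxk]; push_cast; ring
        rw [← hco]
        exact h


lemma multinomial_cast (s' : ℕ) (cs : Fin n → ℕ) (hcs : ∑ j, cs j = s') :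
    (Nat.multinomial Finset.univ cs : ℝ)
      = (Nat.factorial s' : ℝ) / ∏ j, (Nat.factorial (cs j) : ℝ) := by
  have hne : (∏ j, (Nat.factorial (cs j) : ℝ)) ≠ 0 :=
    Finset.prod_ne_zero_iff.mpr fun j _ => Nat.cast_ne_zero.mpr (Nat.factorial_ne_zero _)
  rw [eq_div_iff hne]
  have := Nat.multinomial_spec Finset.univ cs
  have h2 : ((∏ j, Nat.factorial (cs j)) * Nat.multinomial Finset.univ cs : ℕ)
      = Nat.factorial s' := by rw [this, hcs]
  calc (Nat.multinomial Finset.univ cs : ℝ) * ∏ j, (Nat.factorial (cs j) : ℝ)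
      = (((∏ j, Nat.factorial (cs j)) * Nat.multinomial Finset.univ cs : ℕ) : ℝ) := by
        push_cast; ring
    _ = _ := by rw [h2]

lemma M0 (hpsum : ∑ j, p j = 1) (s' : ℕ) :
    ∑ cs ∈ Finset.piAntidiag Finset.univ s',
        ((Nat.factorial s' : ℝ) / ∏ j, (Nat.factorial (cs j) : ℝ)) * ∏ j, (p j / μCS) ^ cs j
      = (1/μCS)^s' := by
  have h1 : ∑ j, p j / μCS = 1/μCS := by rw [← Finset.sum_div, hpsum]
  have h := Finset.sum_pow_eq_sum_piAntidiag (Finset.univ : Finset (Fin n))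
    (fun j => p j / μCS) s'
  rw [h1] at h
  rw [h]
  refine Finset.sum_congr rfl fun cs hcs => ?_
  rw [multinomial_cast s' cs ((Finset.mem_piAntidiag.mp hcs).1)]


lemma M1 (hpsum : ∑ j, p j = 1) (i : Fin n) (s' : ℕ) :
    ∑ cs ∈ Finset.piAntidiag Finset.univ s',
        (cs i : ℝ) * ((Nat.factorial s' : ℝ) / ∏ j, (Nat.factorial (cs j) : ℝ)) *
          ∏ j, (p j / μCS) ^ cs j
      = p i * s' * (1/μCS)^s' := by
  cases s' with
  | zero =>
      rw [Nat.cast_zero, mul_zero, zero_mul]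
      refine Finset.sum_eq_zero fun cs hcs => ?_
      have h0 := (Finset.mem_piAntidiag.mp hcs).1
      have h0' : ∑ j, cs j = 0 := h0
      have hle : cs i ≤ ∑ j, cs j :=
        Finset.single_le_sum (f := cs) (fun j _ => Nat.zero_le _) (Finset.mem_univ i)
      have : cs i = 0 := by omega
      rw [this]
      simp
  | succ r =>
      rw [← Finset.sum_filter_of_ne (p := fun cs => 1 ≤ cs i)
        (by
          intro cs _ hne
          by_contra hlt
          have : cs i = 0 := by omega
          rw [this] at hne
          simp at hne)]
      have step : ∑ cs ∈ (Finset.piAntidiag Finset.univ (r+1)).filter (fun cs => 1 ≤ cs i),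
            (cs i : ℝ) * ((Nat.factorial (r+1) : ℝ) / ∏ j, (Nat.factorial (cs j) : ℝ)) *
              ∏ j, (p j / μCS) ^ cs j
          = ∑ f ∈ Finset.piAntidiag Finset.univ r,
            (p i * ((r:ℝ)+1) * (1/μCS)) *
              (((Nat.factorial r : ℝ) / ∏ j, (Nat.factorial (f j) : ℝ)) *
                ∏ j, (p j / μCS) ^ f j) := by
        refine Finset.sum_nbij'
          (i := fun cs => Function.update cs i (cs i - 1))
          (j := fun f => Function.update f i (f i + 1)) ?_ ?_ ?_ ?_ ?_
        · intro cs hcs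
          rw [Finset.mem_filter, Finset.mem_piAntidiag] at hcs
          obtain ⟨⟨hsum, -⟩, hk⟩ := hcs
          rw [Finset.mem_piAntidiag]
          refine ⟨?_, fun j _ => Finset.mem_univ j⟩
          have hsum' : ∑ j, cs j = r + 1 := hsum
          have hs1 := sum_comp_update (G := fun _ m => m) cs i (cs i - 1)
          have hs2 := sum_split (G := fun _ m => m) cs i
          show ∑ j, Function.update cs i (cs i - 1) j = r
          omega
        · intro f hf
          rw [Finset.mem_piAntidiag] at hf
          obtain ⟨hsum, -⟩ := hf
          rw [Finset.mem_filter, Finset.mem_piAntidiag]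
          refine ⟨⟨?_, fun j _ => Finset.mem_univ j⟩, ?_⟩
          · have hsum' : ∑ j, f j = r := hsum
            have hs1 := sum_comp_update (G := fun _ m => m) f i (f i + 1)
            have hs2 := sum_split (G := fun _ m => m) f i
            show ∑ j, Function.update f i (f i + 1) j = r + 1
            omega
          · show 1 ≤ Function.update f i (f i + 1) i
            rw [Function.update_self]
            omega
        · intro cs hcs
          rw [Finset.mem_filter] at hcs
          obtain ⟨-, hk⟩ := hcs
          rw [Function.update_self, Function.update_idem, Nat.sub_add_cancel hk,
            Function.update_eq_self]
        · intro f _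
          rw [Function.update_self, Function.update_idem, Nat.add_sub_cancel,
            Function.update_eq_self]
        · intro cs hcs
          rw [Finset.mem_filter] at hcs
          obtain ⟨-, hk⟩ := hcs
          obtain ⟨e, he⟩ : ∃ e, cs i = e + 1 := ⟨cs i - 1, by omega⟩
          have hsub : cs i - 1 = e := by omega
          have hEi : (∏ j ∈ Finset.univ.erase i, (Nat.factorial (cs j) : ℝ)) ≠ 0 :=
            Finset.prod_ne_zero_iff.mpr fun j _ => Nat.cast_ne_zero.mpr (Nat.factorial_ne_zero _)
          have hef : ((Nat.factorial e : ℕ) : ℝ) ≠ 0 := Nat.cast_ne_zero.mpr (Nat.factorial_ne_zero _)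
          have he1 : ((e:ℝ)+1) ≠ 0 := by positivity
          have h1 : (cs i : ℝ) * ((Nat.factorial (r+1) : ℝ) / ∏ j, (Nat.factorial (cs j) : ℝ))
              = ((r:ℝ)+1) * ((Nat.factorial r : ℝ)
                  / ∏ j, (Nat.factorial (Function.update cs i (cs i - 1) j) : ℝ)) := by
            rw [prod_comp_update (G := fun _ m => (Nat.factorial m : ℝ)) cs i (cs i - 1),
              prod_split (G := fun _ m => (Nat.factorial m : ℝ)) cs i, hsub, he,
              Nat.factorial_succ e, Nat.factorial_succ r]
            push_cast
            field_simp
          have h2 : (∏ j, (p j / μCS) ^ cs j)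
              = (p i / μCS) * ∏ j, (p j / μCS) ^ (Function.update cs i (cs i - 1) j) := by
            rw [prod_comp_update (G := fun j m => (p j / μCS) ^ m) cs i (cs i - 1),
              prod_split (G := fun j m => (p j / μCS) ^ m) cs i, hsub, he, pow_succ]
            ring
          calc (cs i : ℝ) * ((Nat.factorial (r+1) : ℝ) / ∏ j, (Nat.factorial (cs j) : ℝ)) *
                ∏ j, (p j / μCS) ^ cs j
              = ((cs i : ℝ) * ((Nat.factorial (r+1) : ℝ) / ∏ j, (Nat.factorial (cs j) : ℝ))) *
                ∏ j, (p j / μCS) ^ cs j := by ring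
            _ = _ := by rw [h1, h2]; ring
      rw [step, ← Finset.mul_sum, M0 p μCS hpsum r]
      push_cast
      rw [pow_succ]
      ring


def pi' (x : StM n) : StA n := ⟨∑ j, x.cs j, x.d, x.c, x.u⟩

noncomputable def rest (y : StA n) : ℝ :=
  ∏ i', (p i' / μc i') ^ y.c i' *
    ((p i' / μd i') ^ y.d i' / (Nat.factorial (y.d i') : ℝ)) *
    ((p i' / μu i') ^ y.u i' / (Nat.factorial (y.u i') : ℝ))

noncomputable def NM (x : StM n) : ℝ :=
  ((Nat.factorial (∑ j, x.cs j) : ℝ) / ∏ j, (Nat.factorial (x.cs j) : ℝ)) *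
    ∏ i',
      (p i' / μCS) ^ x.cs i' * (p i' / μc i') ^ x.c i' *
        ((p i' / μd i') ^ x.d i' / (Nat.factorial (x.d i') : ℝ)) *
        ((p i' / μu i') ^ x.u i' / (Nat.factorial (x.u i') : ℝ))

lemma v_eq_rest (y : StA n) :
    v p μc μd μu μCS y = (1/μCS) ^ y.cs * rest p μc μd μu y := rfl

lemma phi_eq (k : ℤ) (x : StM n) :
    phi p μc μd μu μCS k x
      = (1 / W p μc μd μu μCS k) * NM p μc μd μu μCS x := mul_assoc _ _ _

lemma NM_split (x : StM n) :
    NM p μc μd μu μCS x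
      = ((Nat.factorial (∑ j, x.cs j) : ℝ) / ∏ j, (Nat.factorial (x.cs j) : ℝ)) *
          (∏ j, (p j / μCS) ^ x.cs j) * rest p μc μd μu (pi' x) := by
  rw [NM, rest]
  have h1 : ∀ j ∈ (Finset.univ : Finset (Fin n)),
      (p j / μCS) ^ x.cs j * (p j / μc j) ^ x.c j *
        ((p j / μd j) ^ x.d j / (Nat.factorial (x.d j) : ℝ)) *
        ((p j / μu j) ^ x.u j / (Nat.factorial (x.u j) : ℝ))
      = (p j / μCS) ^ x.cs j * ((p j / μc j) ^ x.c j *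
        ((p j / μd j) ^ x.d j / (Nat.factorial (x.d j) : ℝ)) *
        ((p j / μu j) ^ x.u j / (Nat.factorial (x.u j) : ℝ))) := fun j _ => by ring
  rw [Finset.prod_congr rfl h1, Finset.prod_mul_distrib]
  dsimp only [pi']
  ring

lemma totalA_pi' (x : StM n) : totalA (pi' x) = totalM x := by
  simp only [pi', totalA, totalM]
  rw [← Finset.sum_add_distrib]
  exact Finset.sum_congr rfl fun j _ => by omega

lemma marg (u' : (Fin n → ℕ) → ℝ) (g : ℕ → ℝ)
    (hu : ∀ s', ∑ cs ∈ Finset.piAntidiag Finset.univ s',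
        u' cs * ((Nat.factorial s' : ℝ) / ∏ j, (Nat.factorial (cs j) : ℝ)) *
          ∏ j, (p j / μCS) ^ cs j = g s')
    (h : StA n → ℝ) (t : ℕ) :
    ∑ x ∈ SetM n t, u' x.cs * h (pi' x) * NM p μc μd μu μCS x
      = ∑ y ∈ SetA n t, h y * (g y.cs * rest p μc μd μu y) := by
  have hmaps : ∀ x ∈ SetM n t, pi' x ∈ SetA n t := by
    intro x hx
    have hxt := (Finset.mem_filter.mp hx).2
    have h2 : totalA (pi' x) = t := by rw [totalA_pi']; exact hxt
    exact Finset.mem_filter.mpr ⟨mem_FA h2, h2⟩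
  rw [← Finset.sum_fiberwise_of_maps_to hmaps
    (fun x => u' x.cs * h (pi' x) * NM p μc μd μu μCS x)]
  refine Finset.sum_congr rfl fun y hy => ?_
  have hyt : totalA y = t := (Finset.mem_filter.mp hy).2
  calc ∑ x ∈ (SetM n t).filter (fun x => pi' x = y),
        u' x.cs * h (pi' x) * NM p μc μd μu μCS x
      = ∑ cs ∈ Finset.piAntidiag Finset.univ y.cs,
          (u' cs * ((Nat.factorial y.cs : ℝ) / ∏ j, (Nat.factorial (cs j) : ℝ)) *
            ∏ j, (p j / μCS) ^ cs j) * (h y * rest p μc μd μu y) := by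
        refine Finset.sum_nbij' (i := fun x => x.cs)
          (j := fun cs => (⟨cs, y.d, y.c, y.u⟩ : StM n)) ?_ ?_ ?_ ?_ ?_
        · intro x hx
          rw [Finset.mem_filter] at hx
          have hcs : ∑ j, x.cs j = y.cs := congrArg StA.cs hx.2
          exact Finset.mem_piAntidiag.mpr ⟨hcs, fun j _ => Finset.mem_univ j⟩
        · intro cs hcs
          rw [Finset.mem_piAntidiag] at hcs
          obtain ⟨hsum, -⟩ := hcs
          have hsum' : ∑ j, cs j = y.cs := hsum
          have htM : totalM (⟨cs, y.d, y.c, y.u⟩ : StM n) = t := by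
            have e1 : totalM (⟨cs, y.d, y.c, y.u⟩ : StM n)
                = ∑ j, cs j + ∑ j, (y.d j + y.c j + y.u j) := by
              simp only [totalM]
              rw [← Finset.sum_add_distrib]
              exact Finset.sum_congr rfl fun j _ => by omega
            have e2 : totalA y = y.cs + ∑ j, (y.d j + y.c j + y.u j) := rfl
            omega
          have hpi : pi' (⟨cs, y.d, y.c, y.u⟩ : StM n) = y := by
            show (⟨∑ j, cs j, y.d, y.c, y.u⟩ : StA n) = y
            rw [hsum']
          refine Finset.mem_filter.mpr ⟨Finset.mem_filter.mpr ⟨mem_FM htM, htM⟩, hpi⟩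
        · intro x hx
          rw [Finset.mem_filter] at hx
          have hd : x.d = y.d := congrArg StA.d hx.2
          have hc : x.c = y.c := congrArg StA.c hx.2
          have hu2 : x.u = y.u := congrArg StA.u hx.2
          rw [← hd, ← hc, ← hu2]
        · intro cs _
          rfl
        · intro x hx
          rw [Finset.mem_filter] at hx
          have hcs : ∑ j, x.cs j = y.cs := congrArg StA.cs hx.2
          rw [NM_split, hx.2, hcs]
          ring
    _ = _ := by rw [← Finset.sum_mul, hu y.cs]; ring

end Stmt18

open Stmt18

/-- Expected total number of class-`i` tasks under `φ_{m-1}`: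
`E[x^CS_i + x^d_i + x^c_i + x^u_i] = p_i β̃_{CS,1} + β̃_{i,1} + γ_i W(m-2)/W(m-1)`. -/


theorem stmt18 (n m : ℕ) (hn : 1 ≤ n) (hm : 1 ≤ m)
    (p μc μd μu : Fin n → ℝ) (μCS : ℝ)
    (hp : ∀ i, 0 < p i) (hpsum : ∑ i, p i = 1)
    (hμc : ∀ i, 0 < μc i) (hμd : ∀ i, 0 < μd i) (hμu : ∀ i, 0 < μu i) (hμCS : 0 < μCS)
    (i : Fin n) :
    Ephi p μc μd μu μCS ((m : ℤ) - 1)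
        (fun x => ((x.cs i + x.d i + x.c i + x.u i : ℕ) : ℝ)) =
      p i * (∑ k ∈ Finset.Icc 1 (m - 1),
          (1 / μCS) ^ k *
            (W p μc μd μu μCS ((m : ℤ) - 1 - k) / W p μc μd μu μCS ((m : ℤ) - 1))) +
        (∑ k ∈ Finset.Icc 1 (m - 1),
          (p i / μc i) ^ k *
            (W p μc μd μu μCS ((m : ℤ) - 1 - k) / W p μc μd μu μCS ((m : ℤ) - 1))) +
        (p i * (1 / μd i + 1 / μu i)) *
          (W p μc μd μu μCS ((m : ℤ) - 2) / W p μc μd μu μCS ((m : ℤ) - 1)) := by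
  set t := m - 1 with ht
  rw [show (m : ℤ) - 2 = (t : ℤ) - 1 by omega]
  have h11 : ∀ k : ℕ, (m : ℤ) - 1 - (k : ℤ) = ((m : ℤ) - 1) - (k : ℤ) := fun _ => rfl
  rw [show (m : ℤ) - 1 = (t : ℤ) by omega]
  -- Rewrite the two sums on the RHS
  have hWk1 : ∀ k ∈ Finset.Icc 1 t,
      (1/μCS)^k * (W p μc μd μu μCS ((t:ℤ) - (k:ℤ)) / W p μc μd μu μCS (t:ℤ))
        = ((1/μCS)^k * ∑ x ∈ SetA n (t-k), v p μc μd μu μCS x) / W p μc μd μu μCS (t:ℤ) := by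
    intro k hk
    have h1 : ((t:ℤ) - (k:ℤ)) = ((t - k : ℕ) : ℤ) := by
      have := Finset.mem_Icc.mp hk; omega
    rw [h1, W_natS, mul_div_assoc]
  have hWk2 : ∀ k ∈ Finset.Icc 1 t,
      (p i / μc i)^k * (W p μc μd μu μCS ((t:ℤ) - (k:ℤ)) / W p μc μd μu μCS (t:ℤ))
        = ((p i / μc i)^k * ∑ x ∈ SetA n (t-k), v p μc μd μu μCS x) / W p μc μd μu μCS (t:ℤ) := by
    intro k hk
    have h1 : ((t:ℤ) - (k:ℤ)) = ((t - k : ℕ) : ℤ) := by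
      have := Finset.mem_Icc.mp hk; omega
    rw [h1, W_natS, mul_div_assoc]
  rw [Finset.sum_congr rfl hWk1, Finset.sum_congr rfl hWk2, ← Finset.sum_div, ← Finset.sum_div]
  -- Unfold Ephi
  simp only [Ephi]
  rw [tsumM_eq (fun x => ((x.cs i + x.d i + x.c i + x.u i : ℕ) : ℝ) *
    phi p μc μd μu μCS (t:ℤ) x) t,
    show ((FM n t).filter (fun x => totalM x = t)) = SetM n t from rfl]
  have hsummand : ∀ x ∈ SetM n t,
      ((x.cs i + x.d i + x.c i + x.u i : ℕ) : ℝ) * phi p μc μd μu μCS (t:ℤ) x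
        = (1 / W p μc μd μu μCS (t:ℤ)) *
            ((x.cs i : ℝ) * NM p μc μd μu μCS x +
              ((x.d i : ℝ) * NM p μc μd μu μCS x +
                ((x.c i : ℝ) * NM p μc μd μu μCS x +
                  (x.u i : ℝ) * NM p μc μd μu μCS x))) := by
    intro x _
    rw [phi_eq]
    push_cast
    ring
  rw [Finset.sum_congr rfl hsummand, ← Finset.mul_sum, Finset.sum_add_distrib,
    Finset.sum_add_distrib, Finset.sum_add_distrib]
  -- the four marginal sums
  have hA : ∑ x ∈ SetM n t, (x.cs i : ℝ) * NM p μc μd μu μCS x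
      = p i * ∑ k ∈ Finset.Icc 1 t, (1/μCS)^k * ∑ x ∈ SetA n (t-k), v p μc μd μu μCS x := by
    have hm' := marg p μc μd μu μCS (fun cs => (cs i : ℝ))
      (fun s => p i * (s:ℝ) * (1/μCS)^s) (M1 p μCS hpsum i) (fun _ => (1:ℝ)) t
    calc ∑ x ∈ SetM n t, (x.cs i : ℝ) * NM p μc μd μu μCS x
        = ∑ x ∈ SetM n t, (x.cs i : ℝ) * (fun _ => (1:ℝ)) (pi' x) * NM p μc μd μu μCS x :=
          Finset.sum_congr rfl fun x _ => by ring
      _ = ∑ y ∈ SetA n t, (fun _ => (1:ℝ)) y *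
            ((p i * (y.cs:ℝ) * (1/μCS)^y.cs) * rest p μc μd μu y) := hm'
      _ = p i * ∑ y ∈ SetA n t, (y.cs : ℝ) * v p μc μd μu μCS y := by
          rw [Finset.mul_sum]
          exact Finset.sum_congr rfl fun y _ => by rw [v_eq_rest]; ring
      _ = _ := by rw [geomCS]
  have huM0 : ∀ s', ∑ cs ∈ Finset.piAntidiag Finset.univ s',
      (fun (_ : Fin n → ℕ) => (1:ℝ)) cs *
        ((Nat.factorial s' : ℝ) / ∏ j, (Nat.factorial (cs j) : ℝ)) *
          ∏ j, (p j / μCS) ^ cs j = (1/μCS)^s' := by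
    intro s'
    rw [← M0 p μCS hpsum s']
    exact Finset.sum_congr rfl fun cs _ => by ring
  have hB : ∑ x ∈ SetM n t, (x.d i : ℝ) * NM p μc μd μu μCS x
      = (p i / μd i) * W p μc μd μu μCS ((t:ℤ) - 1) := by
    have hm' := marg p μc μd μu μCS (fun _ => (1:ℝ))
      (fun s => (1/μCS)^s) huM0 (fun y => (y.d i : ℝ)) t
    calc ∑ x ∈ SetM n t, (x.d i : ℝ) * NM p μc μd μu μCS x
        = ∑ x ∈ SetM n t, (fun (_ : Fin n → ℕ) => (1:ℝ)) x.cs *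
            ((pi' x).d i : ℝ) * NM p μc μd μu μCS x :=
          Finset.sum_congr rfl fun x _ => by dsimp only [pi']; ring
      _ = ∑ y ∈ SetA n t, (y.d i : ℝ) * ((1/μCS)^y.cs * rest p μc μd μu y) := hm'
      _ = ∑ y ∈ SetA n t, (y.d i : ℝ) * v p μc μd μu μCS y :=
          Finset.sum_congr rfl fun y _ => by rw [v_eq_rest]
      _ = _ := poisD p μc μd μu μCS i t
  have hC : ∑ x ∈ SetM n t, (x.c i : ℝ) * NM p μc μd μu μCS x
      = ∑ k ∈ Finset.Icc 1 t, (p i / μc i)^k * ∑ x ∈ SetA n (t-k), v p μc μd μu μCS x := by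
    have hm' := marg p μc μd μu μCS (fun _ => (1:ℝ))
      (fun s => (1/μCS)^s) huM0 (fun y => (y.c i : ℝ)) t
    calc ∑ x ∈ SetM n t, (x.c i : ℝ) * NM p μc μd μu μCS x
        = ∑ x ∈ SetM n t, (fun (_ : Fin n → ℕ) => (1:ℝ)) x.cs *
            ((pi' x).c i : ℝ) * NM p μc μd μu μCS x :=
          Finset.sum_congr rfl fun x _ => by dsimp only [pi']; ring
      _ = ∑ y ∈ SetA n t, (y.c i : ℝ) * ((1/μCS)^y.cs * rest p μc μd μu y) := hm'
      _ = ∑ y ∈ SetA n t, (y.c i : ℝ) * v p μc μd μu μCS y :=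
          Finset.sum_congr rfl fun y _ => by rw [v_eq_rest]
      _ = _ := geomC p μc μd μu μCS i t
  have hD : ∑ x ∈ SetM n t, (x.u i : ℝ) * NM p μc μd μu μCS x
      = (p i / μu i) * W p μc μd μu μCS ((t:ℤ) - 1) := by
    have hm' := marg p μc μd μu μCS (fun _ => (1:ℝ))
      (fun s => (1/μCS)^s) huM0 (fun y => (y.u i : ℝ)) t
    calc ∑ x ∈ SetM n t, (x.u i : ℝ) * NM p μc μd μu μCS x
        = ∑ x ∈ SetM n t, (fun (_ : Fin n → ℕ) => (1:ℝ)) x.cs *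
            ((pi' x).u i : ℝ) * NM p μc μd μu μCS x :=
          Finset.sum_congr rfl fun x _ => by dsimp only [pi']; ring
      _ = ∑ y ∈ SetA n t, (y.u i : ℝ) * ((1/μCS)^y.cs * rest p μc μd μu y) := hm'
      _ = ∑ y ∈ SetA n t, (y.u i : ℝ) * v p μc μd μu μCS y :=
          Finset.sum_congr rfl fun y _ => by rw [v_eq_rest]
      _ = _ := poisU p μc μd μu μCS i t
  rw [hA, hB, hC, hD]
  ring
end
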